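/- arXiv:2110.03054 — 5 statements merged into one kernel-verified Lean document; each statement's English description precedes it below -/
import Mathlib

section
/- Bounded sensitivity of clipped SGD (Theorem 2, abstract form). Let H be a real normed vector space, 𝒳 a type of data records, m ≥ 2 a batch size, and let X, X' : ℕ → Fin m → 𝒳 be adjacent minibatch sequences. Let C > 0, β > 0 and η > 0, and suppose the per-record update maps Φ_x : H → H satisfy ‖Φ_x(θ)‖ ≤ C for every θ ∈ H and ‖Φ_x(a) − Φ_x(b)‖ ≤ β·‖a − b‖ for all a, b ∈ H, for every x ∈ 𝒳. Then the parameter trajectories θ_i, θ'_i driven by X and X' from a common initialization satisfy, for every T ∈ ℕ, ‖θ_T − θ'_T‖ ≤ 2·((1 + η·β)^T − 1)·C / ((m − 1)·β). -/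
open Finset

/-- **Bounded sensitivity of clipped SGD (abstract form).**
Two adjacent minibatch sequences (differing in at most one record per round)
drive two SGD-like trajectories from a common initialization, with per-record
update maps that are uniformly bounded by `C` and `β`-Lipschitz.  Then the
distance between the trajectories after `T` steps is at most
`2 * ((1 + η β)^T - 1) * C / ((m - 1) β)`. -/
theorem clipped_sgd_sensitivity_bound
    {H : Type*} [NormedAddCommGroup H] [NormedSpace ℝ H]
    {𝒳 : Type*} (m : ℕ) (hm : 2 ≤ m)
    (X X' : ℕ → Fin m → 𝒳)
    (hadj : ∀ i : ℕ, ∃ k₀ : Fin m, ∀ k : Fin m, k ≠ k₀ → X i k = X' i k)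
    (C β η : ℝ) (hC : 0 < C) (hβ : 0 < β) (hη : 0 < η)
    (Φ : 𝒳 → H → H)
    (hbound : ∀ (x : 𝒳) (θ : H), ‖Φ x θ‖ ≤ C)
    (hlip : ∀ (x : 𝒳) (a b : H), ‖Φ x a - Φ x b‖ ≤ β * ‖a - b‖)
    (θ θ' : ℕ → H) (hinit : θ 0 = θ' 0)
    (hstep : ∀ i : ℕ, θ (i + 1) = θ i - (η / m) • ∑ k : Fin m, Φ (X i k) (θ i))
    (hstep' : ∀ i : ℕ, θ' (i + 1) = θ' i - (η / m) • ∑ k : Fin m, Φ (X' i k) (θ' i)) :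
    ∀ T : ℕ, ‖θ T - θ' T‖ ≤ 2 * ((1 + η * β) ^ T - 1) * C / ((m - 1) * β) := by
  have hm2 : (2:ℝ) ≤ (m:ℝ) := by exact_mod_cast hm
  have hm0 : (0:ℝ) < (m:ℝ) := by linarith
  have hm1 : (0:ℝ) < (m:ℝ) - 1 := by linarith
  have key : ∀ T : ℕ, ‖θ T - θ' T‖ ≤ 2 * ((1 + η * β) ^ T - 1) * C / (m * β) := by
    intro T
    induction T with
    | zero => simp [hinit]
    | succ i ih =>
      obtain ⟨k₀, hk₀⟩ := hadj i
      set d := ‖θ i - θ' i‖ with hd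
      have hd0 : 0 ≤ d := norm_nonneg _
      have hdiff : θ (i+1) - θ' (i+1)
          = (θ i - θ' i) - (η/m) • (∑ k : Fin m, (Φ (X i k) (θ i) - Φ (X' i k) (θ' i))) := by
        rw [hstep, hstep', Finset.sum_sub_distrib, smul_sub]; abel
      have hterm : ∀ k : Fin m, ‖Φ (X i k) (θ i) - Φ (X' i k) (θ' i)‖
          ≤ if k = k₀ then 2*C else β * d := by
        intro k
        by_cases hk : k = k₀
        · simp only [hk, if_pos]
          calc ‖Φ (X i k₀) (θ i) - Φ (X' i k₀) (θ' i)‖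
              ≤ ‖Φ (X i k₀) (θ i)‖ + ‖Φ (X' i k₀) (θ' i)‖ := norm_sub_le _ _
            _ ≤ 2*C := by have := hbound (X i k₀) (θ i); have := hbound (X' i k₀) (θ' i); linarith
        · simp only [hk, if_neg, not_false_iff]
          rw [hk₀ k hk]
          exact hlip (X' i k) (θ i) (θ' i)
      have hsum : ‖∑ k : Fin m, (Φ (X i k) (θ i) - Φ (X' i k) (θ' i))‖
          ≤ m * (β * d) + 2*C := by
        calc ‖∑ k : Fin m, (Φ (X i k) (θ i) - Φ (X' i k) (θ' i))‖
            ≤ ∑ k : Fin m, ‖Φ (X i k) (θ i) - Φ (X' i k) (θ' i)‖ := norm_sum_le _ _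
          _ ≤ ∑ k : Fin m, (if k = k₀ then 2*C else β * d) :=
              Finset.sum_le_sum (fun k _ => hterm k)
          _ = ∑ k : Fin m, (β * d + if k = k₀ then 2*C - β*d else 0) := by
              apply Finset.sum_congr rfl; intro k _
              by_cases hk : k = k₀ <;> simp [hk]
          _ = m * (β * d) + (2*C - β*d) := by
              rw [Finset.sum_add_distrib, Finset.sum_const, Finset.sum_ite_eq' Finset.univ k₀]
              simp [mul_comm]
          _ ≤ m * (β * d) + 2*C := by nlinarith
      have hrec : ‖θ (i+1) - θ' (i+1)‖ ≤ (1 + η*β) * d + 2*η*C/m := by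
        rw [hdiff]
        calc ‖(θ i - θ' i) - (η/m) • (∑ k : Fin m, (Φ (X i k) (θ i) - Φ (X' i k) (θ' i)))‖
            ≤ d + ‖(η/m) • (∑ k : Fin m, (Φ (X i k) (θ i) - Φ (X' i k) (θ' i)))‖ :=
              norm_sub_le _ _
          _ = d + (η/m) * ‖∑ k : Fin m, (Φ (X i k) (θ i) - Φ (X' i k) (θ' i))‖ := by
              rw [norm_smul, Real.norm_eq_abs, abs_of_pos (by positivity)]
          _ ≤ d + (η/m) * (m * (β * d) + 2*C) := by
              have : (0:ℝ) < η/m := by positivity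
              nlinarith [hsum]
          _ = (1 + η*β) * d + 2*η*C/m := by field_simp; ring
      have h1 : (0:ℝ) < 1 + η*β := by positivity
      calc ‖θ (i+1) - θ' (i+1)‖ ≤ (1 + η*β) * d + 2*η*C/m := hrec
        _ ≤ (1 + η*β) * (2 * ((1 + η * β) ^ i - 1) * C / (m * β)) + 2*η*C/m := by nlinarith
        _ = 2 * ((1 + η * β) ^ (i+1) - 1) * C / (m * β) := by field_simp; ring
  intro T
  refine (key T).trans ?_
  have hone : (1:ℝ) ≤ (1 + η*β)^T := one_le_pow₀ (by nlinarith)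
  have hnum : 0 ≤ 2 * ((1 + η * β) ^ T - 1) * C := by nlinarith
  gcongr
  · linarith
end

section
/- Recursive step inequality in the proof of Theorem 2. Let H be a real normed vector space, m ≥ 2, C > 0, β > 0, η > 0, and suppose the per-record update maps Φ_x : H → H satisfy ‖Φ_x(θ)‖ ≤ C for every θ ∈ H and ‖Φ_x(a) − Φ_x(b)‖ ≤ β·‖a − b‖ for all a, b ∈ H, for every x ∈ 𝒳. Let X, X' : ℕ → Fin m → 𝒳 be adjacent minibatch sequences and let θ_i, θ'_i be the parameter trajectories from a common initialization. Then for every i ∈ ℕ, ‖θ_{i+1} − θ'_{i+1}‖ ≤ 2·η·C/m + (1 + η·(1 − 1/m)·β)·‖θ_i − θ'_i‖. -/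
open Finset

/-- **Recursive step inequality** in the proof of Theorem 2: for adjacent
minibatch sequences and per-record update maps bounded by `C` and
`β`-Lipschitz, the distance between the trajectories satisfies
`‖θ_{i+1} - θ'_{i+1}‖ ≤ 2ηC/m + (1 + η(1 - 1/m)β) ‖θ_i - θ'_i‖`. -/
theorem clipped_sgd_recursive_step_bound
    {H : Type*} [NormedAddCommGroup H] [NormedSpace ℝ H]
    {𝒳 : Type*} (m : ℕ) (hm : 2 ≤ m)
    (X X' : ℕ → Fin m → 𝒳)
    (hadj : ∀ i : ℕ, ∃ k₀ : Fin m, ∀ k : Fin m, k ≠ k₀ → X i k = X' i k)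
    (C β η : ℝ) (hC : 0 < C) (hβ : 0 < β) (hη : 0 < η)
    (Φ : 𝒳 → H → H)
    (hbound : ∀ (x : 𝒳) (θ : H), ‖Φ x θ‖ ≤ C)
    (hlip : ∀ (x : 𝒳) (a b : H), ‖Φ x a - Φ x b‖ ≤ β * ‖a - b‖)
    (θ θ' : ℕ → H) (hinit : θ 0 = θ' 0)
    (hstep : ∀ i : ℕ, θ (i + 1) = θ i - (η / m) • ∑ k : Fin m, Φ (X i k) (θ i))
    (hstep' : ∀ i : ℕ, θ' (i + 1) = θ' i - (η / m) • ∑ k : Fin m, Φ (X' i k) (θ' i)) :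
    ∀ i : ℕ, ‖θ (i + 1) - θ' (i + 1)‖ ≤
      2 * η * C / m + (1 + η * (1 - 1 / m) * β) * ‖θ i - θ' i‖ := by
  intro i
  obtain ⟨k₀, hk₀⟩ := hadj i
  have hmpos : (0 : ℝ) < m := by positivity
  have key : θ (i + 1) - θ' (i + 1) =
      (θ i - θ' i) - (η / m) • ∑ k : Fin m, (Φ (X i k) (θ i) - Φ (X' i k) (θ' i)) := by
    rw [hstep, hstep', Finset.sum_sub_distrib, smul_sub]
    abel
  rw [key]
  have h1 : ‖θ (i+1) - θ' (i+1)‖ ≤ ‖θ i - θ' i‖ +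
      (η / m) * ∑ k : Fin m, ‖Φ (X i k) (θ i) - Φ (X' i k) (θ' i)‖ := by
    rw [key]
    refine (norm_sub_le _ _).trans ?_
    gcongr
    rw [norm_smul, Real.norm_eq_abs, abs_of_pos (by positivity)]
    gcongr
    exact norm_sum_le _ _
  rw [← key]
  refine h1.trans ?_
  have hsum : ∑ k : Fin m, ‖Φ (X i k) (θ i) - Φ (X' i k) (θ' i)‖ ≤
      2 * C + (m - 1) * (β * ‖θ i - θ' i‖) := by
    rw [← Finset.sum_erase_add _ _ (Finset.mem_univ k₀)]
    have hA : ∑ k ∈ Finset.univ.erase k₀, ‖Φ (X i k) (θ i) - Φ (X' i k) (θ' i)‖ ≤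
        (m - 1) * (β * ‖θ i - θ' i‖) := by
      have : ∀ k ∈ Finset.univ.erase k₀,
          ‖Φ (X i k) (θ i) - Φ (X' i k) (θ' i)‖ ≤ β * ‖θ i - θ' i‖ := by
        intro k hk
        rw [hk₀ k (Finset.mem_erase.mp hk).1]
        exact hlip _ _ _
      refine (Finset.sum_le_sum this).trans ?_
      rw [Finset.sum_const, nsmul_eq_mul, Finset.card_erase_of_mem (Finset.mem_univ k₀),
        Finset.card_univ, Fintype.card_fin]
      have : ((m - 1 : ℕ) : ℝ) = (m : ℝ) - 1 := by
        rw [Nat.cast_sub (by omega)]; simp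
      rw [this]
    have hB : ‖Φ (X i k₀) (θ i) - Φ (X' i k₀) (θ' i)‖ ≤ 2 * C := by
      calc ‖Φ (X i k₀) (θ i) - Φ (X' i k₀) (θ' i)‖
          ≤ ‖Φ (X i k₀) (θ i)‖ + ‖Φ (X' i k₀) (θ' i)‖ := norm_sub_le _ _
        _ ≤ C + C := add_le_add (hbound _ _) (hbound _ _)
        _ = 2 * C := by ring
    linarith
  have : ‖θ i - θ' i‖ + (η / m) * ∑ k : Fin m, ‖Φ (X i k) (θ i) - Φ (X' i k) (θ' i)‖ ≤
      ‖θ i - θ' i‖ + (η / m) * (2 * C + (m - 1) * (β * ‖θ i - θ' i‖)) := by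
    gcongr
  refine this.trans (le_of_eq ?_)
  field_simp
  ring
end

section
/- Smoothness of Gaussian randomized smoothing (used with β = L/σ in the proof of Theorem 2). Let d ∈ ℕ, L > 0, σ > 0, and let f : EuclideanSpace ℝ (Fin d) → ℝ be differentiable and L-Lipschitz. Define the smoothed function f̄(θ) = ∫ f(θ + z) dγ_σ^d(z). Then f̄ is differentiable and its gradient ∇f̄ is (L/σ)-Lipschitz, i.e. ‖∇f̄(a) − ∇f̄(b)‖ ≤ (L/σ)·‖a − b‖ for all a, b ∈ EuclideanSpace ℝ (Fin d). -/
open MeasureTheory ProbabilityTheory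

/-- The product measure on `EuclideanSpace ℝ (Fin d)` whose `d` coordinates are
i.i.d. centered real Gaussians with variance `σ²`. -/
noncomputable def gaussianPi (d : ℕ) (σ : ℝ) : Measure (EuclideanSpace ℝ (Fin d)) :=
  Measure.map (MeasurableEquiv.toLp 2 (Fin d → ℝ))
    (Measure.pi fun _ : Fin d => gaussianReal 0 (Real.toNNReal (σ ^ 2)))

open Real Filter Set ENNReal Topology

namespace GaussSmooth


variable {σ : ℝ}

/-- explicit pdf -/
noncomputable def p (σ : ℝ) (x : ℝ) : ℝ :=
  (Real.sqrt (2 * π * σ ^ 2))⁻¹ * Real.exp (-(2 * σ ^ 2)⁻¹ * x ^ 2)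

lemma vσ_ne_zero (hσ : 0 < σ) : Real.toNNReal (σ ^ 2) ≠ 0 := by
  simp [Real.toNNReal_eq_zero, not_le, pow_pos hσ, hσ.ne']

lemma coe_vσ (hσ : 0 < σ) : ((Real.toNNReal (σ ^ 2)) : ℝ) = σ ^ 2 :=
  Real.coe_toNNReal _ (sq_nonneg σ)

lemma pdf_eq (hσ : 0 < σ) : gaussianPDFReal 0 (Real.toNNReal (σ ^ 2)) = p σ := by
  ext x
  rw [gaussianPDFReal, coe_vσ hσ, p]
  congr 1
  rw [sub_zero]
  congr 1
  have : (σ:ℝ) ^ 2 ≠ 0 := by positivity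
  field_simp

lemma p_pos (hσ : 0 < σ) (x : ℝ) : 0 < p σ x := by
  rw [← pdf_eq hσ]
  exact gaussianPDFReal_pos _ _ _ (vσ_ne_zero hσ)

lemma p_cont : Continuous (p σ) := by
  unfold p; fun_prop

lemma hasDerivAt_p (hσ : 0 < σ) (x : ℝ) :
    HasDerivAt (p σ) (-(x / σ ^ 2) * p σ x) x := by
  have hb : HasDerivAt (fun y : ℝ => -(2 * σ ^ 2)⁻¹ * y ^ 2)
      (-(2 * σ ^ 2)⁻¹ * (2 * x)) x := by
    have := (hasDerivAt_pow 2 x).const_mul (-(2 * σ ^ 2)⁻¹)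
    refine this.congr_deriv ?_
    push_cast
    ring
  have := (hb.exp).const_mul (Real.sqrt (2 * π * σ ^ 2))⁻¹
  refine this.congr_deriv ?_
  rw [p]
  have hσ2 : (σ:ℝ) ^ 2 ≠ 0 := by positivity
  field_simp

private lemma gpdf_eq_nn (hσ : 0 < σ) : (gaussianPDF 0 (Real.toNNReal (σ ^ 2)))
    = fun x => (((gaussianPDFReal 0 (Real.toNNReal (σ ^ 2)) x).toNNReal : NNReal) : ENNReal) := by
  ext x; rw [gaussianPDF]; rfl

/-- Integral against the 1-d Gaussian as a density integral. -/
lemma integral_g1 (hσ : 0 < σ) (h : ℝ → ℝ) :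
    ∫ x, h x ∂(gaussianReal 0 (Real.toNNReal (σ ^ 2))) = ∫ x, h x * p σ x := by
  rw [gaussianReal_of_var_ne_zero _ (vσ_ne_zero hσ)]
  have hm : Measurable fun x => (gaussianPDFReal 0 (Real.toNNReal (σ ^ 2)) x).toNNReal :=
    (measurable_gaussianPDFReal _ _).real_toNNReal
  rw [gpdf_eq_nn hσ, integral_withDensity_eq_integral_smul hm]
  congr 1; ext x
  rw [NNReal.smul_def, Real.coe_toNNReal _ (gaussianPDFReal_nonneg _ _ _), smul_eq_mul,
    pdf_eq hσ, mul_comm]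

lemma integrable_g1_iff (hσ : 0 < σ) {h : ℝ → ℝ} :
    Integrable h (gaussianReal 0 (Real.toNNReal (σ ^ 2))) ↔
      Integrable (fun x => h x * p σ x) volume := by
  rw [gaussianReal_of_var_ne_zero _ (vσ_ne_zero hσ)]
  have hm : Measurable fun x => (gaussianPDFReal 0 (Real.toNNReal (σ ^ 2)) x).toNNReal :=
    (measurable_gaussianPDFReal _ _).real_toNNReal
  rw [gpdf_eq_nn hσ, integrable_withDensity_iff_integrable_smul hm]
  have hc : ∀ x : ℝ, ((gaussianPDFReal 0 (Real.toNNReal (σ ^ 2)) x).toNNReal : ℝ) • h x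
      = h x * p σ x := by
    intro x
    rw [← pdf_eq hσ]
    simp [NNReal.smul_def, Real.coe_toNNReal _ (gaussianPDFReal_nonneg _ _ _), mul_comm]
  constructor <;> intro hI <;> refine hI.congr ?_ <;> filter_upwards with x
  · exact hc x
  · exact (hc x).symm

lemma integrable_p (hσ : 0 < σ) : Integrable (p σ) := by
  have hb : (0:ℝ) < (2 * σ ^ 2)⁻¹ := by positivity
  have := (integrable_exp_neg_mul_sq hb).const_mul (Real.sqrt (2 * π * σ ^ 2))⁻¹
  exact this.congr (by filter_upwards with x; rw [p])

lemma integrable_abs_mul_p (hσ : 0 < σ) : Integrable (fun x => |x| * p σ x) := by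
  have hb : (0:ℝ) < (2 * σ ^ 2)⁻¹ := by positivity
  have := (integrable_mul_exp_neg_mul_sq hb).abs.const_mul (Real.sqrt (2 * π * σ ^ 2))⁻¹
  refine this.congr ?_
  filter_upwards with x
  rw [abs_mul, abs_of_pos (exp_pos _), p]
  ring

lemma integrable_sq_mul_p (hσ : 0 < σ) : Integrable (fun x => x ^ 2 * p σ x) := by
  have hb : (0:ℝ) < (2 * σ ^ 2)⁻¹ := by positivity
  have := (integrable_rpow_mul_exp_neg_mul_sq hb (by norm_num : (-1:ℝ) < 2)).const_mul
    (Real.sqrt (2 * π * σ ^ 2))⁻¹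
  refine this.congr ?_
  filter_upwards with x
  rw [show ((2:ℝ)) = ((2:ℕ):ℝ) by norm_num, Real.rpow_natCast, p]
  push_cast
  ring

lemma integrable_abs1 (hσ : 0 < σ) :
    Integrable (fun x => |x|) (gaussianReal 0 (Real.toNNReal (σ ^ 2))) :=
  (integrable_g1_iff hσ).2 (integrable_abs_mul_p hσ)

lemma integrable_sq1 (hσ : 0 < σ) :
    Integrable (fun x => x ^ 2) (gaussianReal 0 (Real.toNNReal (σ ^ 2))) :=
  (integrable_g1_iff hσ).2 (integrable_sq_mul_p hσ)


section IBP1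


variable {K : NNReal} {g : ℝ → ℝ}

lemma abs_le_affine (hl : LipschitzWith K g) (x : ℝ) : |g x| ≤ |g 0| + K * |x| := by
  have := hl.dist_le_mul x 0
  rw [Real.dist_eq, Real.dist_eq, sub_zero] at this
  calc |g x| = |g 0 + (g x - g 0)| := by ring_nf
  _ ≤ |g 0| + |g x - g 0| := abs_add_le _ _
  _ ≤ |g 0| + K * |x| := by linarith

lemma abs_deriv_le (hg : Differentiable ℝ g) (hl : LipschitzWith K g) (x : ℝ) :
    |deriv g x| ≤ K := by
  have h1 : deriv g x = fderiv ℝ g x 1 := by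
    rw [fderiv_apply_one_eq_deriv]
  have h2 : ‖fderiv ℝ g x 1‖ ≤ ‖fderiv ℝ g x‖ * ‖(1:ℝ)‖ := (fderiv ℝ g x).le_opNorm 1
  have h3 : ‖fderiv ℝ g x‖ ≤ K := norm_fderiv_le_of_lipschitz ℝ hl
  rw [← Real.norm_eq_abs, h1]
  simpa using h2.trans (by simpa using h3)

lemma integrable_deriv_mul_p (hσ : 0 < σ) (hg : Differentiable ℝ g) (hl : LipschitzWith K g) :
    Integrable (fun x => deriv g x * p σ x) := by
  refine Integrable.bdd_mul (integrable_p hσ) (measurable_deriv g).aestronglyMeasurable (c := K) (ae_of_all _ ?_)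
  intro x
  rw [Real.norm_eq_abs]
  exact abs_deriv_le hg hl x

lemma integrable_g_mul_x_mul_p (hσ : 0 < σ) (hl : LipschitzWith K g) :
    Integrable (fun x => g x * ((σ ^ 2)⁻¹ * x) * p σ x) := by
  have hbig : Integrable (fun x => (σ ^ 2)⁻¹ * (|g 0| * (|x| * p σ x) + K * (x ^ 2 * p σ x))) := by
    exact (((integrable_abs_mul_p hσ).const_mul _).add
      ((integrable_sq_mul_p hσ).const_mul _)).const_mul _
  refine hbig.mono' ?_ ?_
  · have : Continuous (fun x : ℝ => g x * ((σ ^ 2)⁻¹ * x) * p σ x) := by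
      have := hl.continuous
      have := (p_cont (σ := σ))
      fun_prop
    exact this.aestronglyMeasurable
  · filter_upwards with x
    have h1 : |g x| ≤ |g 0| + K * |x| := abs_le_affine hl x
    have h2 : (0:ℝ) < p σ x := p_pos hσ x
    rw [Real.norm_eq_abs, abs_mul, abs_mul, abs_of_pos h2, abs_mul,
      abs_of_nonneg (inv_nonneg.2 (sq_nonneg σ))]
    have hxx : |x| * |x| = x ^ 2 := by rw [← abs_mul, abs_mul_self x]; ring
    calc |g x| * ((σ ^ 2)⁻¹ * |x|) * p σ x
        ≤ (|g 0| + K * |x|) * ((σ ^ 2)⁻¹ * |x|) * p σ x := by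
          have : (0:ℝ) ≤ (σ ^ 2)⁻¹ * |x| := by positivity
          nlinarith [h2.le, mul_le_mul_of_nonneg_right h1 this]
      _ = (σ ^ 2)⁻¹ * (|g 0| * (|x| * p σ x) + K * (x ^ 2 * p σ x)) := by
          rw [← hxx]; ring

end IBP1

section IBP2

variable {K : NNReal} {g : ℝ → ℝ}


lemma tendsto_aux (hσ : 0 < σ) (C Kr : ℝ) :
    Tendsto (fun x : ℝ => (C + Kr * x) * p σ x) atTop (𝓝 0) := by
  have hb : (0:ℝ) < (2 * σ ^ 2)⁻¹ := by positivity
  have h1 : Tendsto (fun x : ℝ => Real.exp (-(2 * σ ^ 2)⁻¹ * x ^ 2)) atTop (𝓝 0) := by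
    refine (exp_neg_mul_sq_isLittleO_exp_neg hb).isBigO.trans_tendsto ?_
    exact Real.tendsto_exp_atBot.comp tendsto_neg_atTop_atBot
  have h2 : Tendsto (fun x : ℝ => x * Real.exp (-(2 * σ ^ 2)⁻¹ * x ^ 2)) atTop (𝓝 0) := by
    have h := (rpow_mul_exp_neg_mul_sq_isLittleO_exp_neg hb 1).isBigO
    have h' : (fun x : ℝ => x * Real.exp (-(2 * σ ^ 2)⁻¹ * x ^ 2))
        =O[atTop] fun x => Real.exp (-(1/2) * x) := by
      refine Asymptotics.IsBigO.congr' h ?_ EventuallyEq.rfl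
      filter_upwards with x using by rw [Real.rpow_one]
    refine h'.trans_tendsto ?_
    refine Real.tendsto_exp_atBot.comp ?_
    exact Tendsto.const_mul_atTop_of_neg (by norm_num : (-(1/2):ℝ) < 0) tendsto_id
  have hc := ((h1.const_mul (C * (Real.sqrt (2 * π * σ ^ 2))⁻¹)).add
    (h2.const_mul (Kr * (Real.sqrt (2 * π * σ ^ 2))⁻¹)))
  rw [mul_zero, mul_zero, add_zero] at hc
  refine hc.congr ?_
  intro x
  rw [p]
  ring

lemma tendsto_H_top (hσ : 0 < σ) (hl : LipschitzWith K g) :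
    Tendsto (fun x => g x * p σ x) atTop (𝓝 0) := by
  refine squeeze_zero_norm' ?_ (tendsto_aux hσ (|g 0|) K)
  filter_upwards [eventually_ge_atTop (0:ℝ)] with x hx
  rw [Real.norm_eq_abs, abs_mul, abs_of_pos (p_pos hσ x)]
  have := abs_le_affine hl x
  rw [abs_of_nonneg hx] at this
  exact mul_le_mul_of_nonneg_right this (p_pos hσ x).le

lemma tendsto_H_bot (hσ : 0 < σ) (hl : LipschitzWith K g) :
    Tendsto (fun x => g x * p σ x) atBot (𝓝 0) := by
  have hpe : ∀ x : ℝ, p σ (-x) = p σ x := by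
    intro x; rw [p, p, neg_pow]; norm_num
  have h : Tendsto (fun x => g (-x) * p σ (-x)) atTop (𝓝 0) := by
    refine squeeze_zero_norm' ?_ (tendsto_aux hσ (|g 0|) K)
    filter_upwards [eventually_ge_atTop (0:ℝ)] with x hx
    rw [Real.norm_eq_abs, abs_mul, hpe, abs_of_pos (p_pos hσ x)]
    have := abs_le_affine hl (-x)
    rw [abs_neg, abs_of_nonneg hx] at this
    exact mul_le_mul_of_nonneg_right this (p_pos hσ x).le
  have := h.comp tendsto_neg_atBot_atTop
  refine this.congr ?_
  intro x
  simp

lemma ibp1 (hσ : 0 < σ) (hg : Differentiable ℝ g) (hl : LipschitzWith K g) :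
    ∫ x, deriv g x ∂(gaussianReal 0 (Real.toNNReal (σ ^ 2)))
      = (σ ^ 2)⁻¹ * ∫ x, g x * x ∂(gaussianReal 0 (Real.toNNReal (σ ^ 2))) := by
  set φ := fun x => deriv g x * p σ x - g x * ((σ ^ 2)⁻¹ * x) * p σ x with hφdef
  have hint1 := integrable_deriv_mul_p hσ hg hl
  have hint2 := integrable_g_mul_x_mul_p hσ hl
  have hφ : Integrable φ := hint1.sub hint2
  have hH : ∀ x, HasDerivAt (fun x => g x * p σ x) (φ x) x := by
    intro x
    have hd := (hg x).hasDerivAt.mul (hasDerivAt_p hσ x)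
    refine hd.congr_deriv ?_
    have hσ2 : (σ:ℝ) ^ 2 ≠ 0 := by positivity
    simp only [hφdef]
    field_simp
    ring
  have hIoi : ∫ x in Ioi (0:ℝ), φ x = 0 - g 0 * p σ 0 :=
    integral_Ioi_of_hasDerivAt_of_tendsto' (fun x _ => hH x) hφ.integrableOn
      (tendsto_H_top hσ hl)
  have hIic : ∫ x in Iic (0:ℝ), φ x = g 0 * p σ 0 - 0 :=
    integral_Iic_of_hasDerivAt_of_tendsto' (fun x _ => hH x) hφ.integrableOn
      (tendsto_H_bot hσ hl)
  have htot : ∫ x, φ x = 0 := by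
    rw [← intervalIntegral.integral_Iic_add_Ioi (b := (0:ℝ)) hφ.integrableOn hφ.integrableOn, hIoi, hIic]
    ring
  have hsub : ∫ x, φ x
      = (∫ x, deriv g x * p σ x) - ∫ x, g x * ((σ ^ 2)⁻¹ * x) * p σ x :=
    integral_sub hint1 hint2
  have heq : ∫ x, deriv g x * p σ x = ∫ x, g x * ((σ ^ 2)⁻¹ * x) * p σ x := by
    rw [hsub] at htot; linarith
  rw [integral_g1 hσ, integral_g1 hσ, heq, ← integral_const_mul]
  congr 1; ext x; ring

end IBP2

section Multi

variable {n : ℕ} {σ L : ℝ}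

local notation "Esp" => EuclideanSpace ℝ (Fin (n+1))
local notation "μ1" => gaussianReal 0 (Real.toNNReal (σ ^ 2))

noncomputable def iE {n : ℕ} : (∀ _ : Fin (n+1), ℝ) ≃ EuclideanSpace ℝ (Fin (n+1)) :=
  (WithLp.equiv 2 _).symm

instance : IsProbabilityMeasure (gaussianPi (n+1) σ) := by
  rw [gaussianPi]; exact Measure.isProbabilityMeasure_map (MeasurableEquiv.toLp 2 (Fin (n+1) → ℝ)).measurable.aemeasurable

lemma map_eval (i : Fin (n+1)) :
    (gaussianPi (n+1) σ).map (fun z => z i) = gaussianReal 0 (Real.toNNReal (σ ^ 2)) := by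
  set e := MeasurableEquiv.piFinSuccAbove (fun _ : Fin (n+1) => ℝ) i
  have mp := measurePreserving_piFinSuccAbove (fun _ : Fin (n+1) => μ1) i
  have hcomp : (fun z : Esp => z i) ∘ (MeasurableEquiv.toLp 2 (Fin (n+1) → ℝ)) = Prod.fst ∘ ⇑e := by
    funext z
    simp [e, MeasurableEquiv.piFinSuccAbove_apply]
  have h1 : (Measure.pi fun _ : Fin (n+1) => μ1).map (Prod.fst ∘ ⇑e)
      = ((Measure.pi fun _ : Fin (n+1) => μ1).map ⇑e).map Prod.fst :=
    (Measure.map_map measurable_fst e.measurable).symm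
  have h2 : (Measure.pi fun _ : Fin (n+1) => μ1).map ⇑e = (μ1).prod (Measure.pi fun _ : Fin n => μ1) := mp.map_eq
  rw [gaussianPi, Measure.map_map (g := fun z : Esp => z i) ((measurable_pi_apply i).comp (WithLp.measurable_ofLp 2 _))
    (MeasurableEquiv.toLp 2 (Fin (n+1) → ℝ)).measurable, hcomp, h1, h2, Measure.map_fst_prod]
  simp

lemma integrable_comp_eval {F : ℝ → ℝ} (hFm : AEStronglyMeasurable F μ1)
    (hF : Integrable F μ1) (i : Fin (n+1)) :
    Integrable (fun z : Esp => F (z i)) (gaussianPi (n+1) σ) := by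
  have hFm' : AEStronglyMeasurable F ((gaussianPi (n+1) σ).map (fun z => z i)) := by
    rwa [map_eval i]
  have hF' : Integrable F ((gaussianPi (n+1) σ).map (fun z => z i)) := by
    rwa [map_eval i]
  exact (integrable_map_measure hFm' ((measurable_pi_apply i).comp (WithLp.measurable_ofLp 2 _)).aemeasurable).mp hF'

lemma int_abs_eval (hσ : 0 < σ) (i : Fin (n+1)) :
    Integrable (fun z : Esp => |z i|) (gaussianPi (n+1) σ) :=
  integrable_comp_eval continuous_abs.aestronglyMeasurable (integrable_abs1 hσ) i

lemma int_sq_eval (hσ : 0 < σ) (i : Fin (n+1)) :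
    Integrable (fun z : Esp => (z i) ^ 2) (gaussianPi (n+1) σ) :=
  integrable_comp_eval (continuous_pow 2).aestronglyMeasurable (integrable_sq1 hσ) i

lemma int_S (hσ : 0 < σ) :
    Integrable (fun z : Esp => ∑ i, |z i|) (gaussianPi (n+1) σ) :=
  integrable_finset_sum _ (fun i _ => int_abs_eval hσ i)

lemma int_Q (hσ : 0 < σ) :
    Integrable (fun z : Esp => ∑ i, (z i) ^ 2) (gaussianPi (n+1) σ) :=
  integrable_finset_sum _ (fun i _ => int_sq_eval hσ i)

lemma norm_le_S (z : Esp) : ‖z‖ ≤ ∑ i, |z i| := by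
  rw [EuclideanSpace.norm_eq]
  have h1 : ∑ i, ‖z i‖ ^ 2 ≤ (∑ i, |z i|) ^ 2 := by
    simp_rw [Real.norm_eq_abs]
    exact Finset.sum_sq_le_sq_sum_of_nonneg (fun i _ => abs_nonneg _)
  calc Real.sqrt (∑ i, ‖z i‖ ^ 2) ≤ Real.sqrt ((∑ i, |z i|) ^ 2) := Real.sqrt_le_sqrt h1
  _ = ∑ i, |z i| := Real.sqrt_sq (Finset.sum_nonneg fun i _ => abs_nonneg _)

lemma coord_le_norm (u : Esp) (i : Fin (n+1)) : |u i| ≤ ‖u‖ := by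
  rw [EuclideanSpace.norm_eq, show |u i| = Real.sqrt ((u i) ^ 2) by rw [Real.sqrt_sq_eq_abs]]
  apply Real.sqrt_le_sqrt
  rw [show (u i) ^ 2 = ‖u i‖ ^ 2 by simp]
  exact Finset.single_le_sum (f := fun j => ‖u j‖ ^ 2) (fun j _ => by positivity) (Finset.mem_univ i)

lemma S_sq_le (z : Esp) : (∑ i, |z i|) ^ 2 ≤ (n+1) * ∑ i, (z i) ^ 2 := by
  have h := sq_sum_le_card_mul_sum_sq (s := (Finset.univ : Finset (Fin (n+1))))
    (f := fun i => |z i|)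
  simp only [Finset.card_univ, Fintype.card_fin, sq_abs] at h
  exact_mod_cast h

lemma X_abs_le (u : Esp) (z : Esp) : |∑ i, u i * z i| ≤ ‖u‖ * ∑ i, |z i| := by
  calc |∑ i, u i * z i| ≤ ∑ i, |u i * z i| := Finset.abs_sum_le_sum_abs _ _
  _ ≤ ∑ i, ‖u‖ * |z i| := by
      refine Finset.sum_le_sum fun i _ => ?_
      rw [abs_mul]
      exact mul_le_mul_of_nonneg_right (coord_le_norm u i) (abs_nonneg _)
  _ = ‖u‖ * ∑ i, |z i| := by rw [Finset.mul_sum]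

section WithF

variable (hσ : 0 < σ) (hL : 0 < L) {f : EuclideanSpace ℝ (Fin (n+1)) → ℝ}
  (hdiff' : Differentiable ℝ f) (hlip : LipschitzWith (Real.toNNReal L) f)

include hσ hL hdiff' hlip

omit hσ hdiff' in
lemma bound_f (θ z : Esp) : |f (θ + z)| ≤ |f θ| + L * ∑ i, |z i| := by
  have h := hlip.dist_le_mul (θ + z) θ
  rw [Real.dist_eq] at h
  have hd : dist (θ + z) θ = ‖z‖ := by
    rw [dist_eq_norm]; congr 1; abel
  rw [hd, Real.coe_toNNReal _ hL.le] at h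
  have h2 : ‖z‖ ≤ ∑ i, |z i| := norm_le_S z
  have h3 : |f (θ + z)| ≤ |f θ| + |f (θ + z) - f θ| := by
    calc |f (θ + z)| = |f θ + (f (θ + z) - f θ)| := by ring_nf
    _ ≤ |f θ| + |f (θ + z) - f θ| := abs_add_le _ _
  nlinarith

omit hdiff' in
lemma int_f (θ : Esp) : Integrable (fun z => f (θ + z)) (gaussianPi (n+1) σ) := by
  refine Integrable.mono' ((integrable_const (|f θ|)).add ((int_S hσ).const_mul L)) ?_ ?_
  · exact (hlip.continuous.comp (continuous_const.add continuous_id)).aestronglyMeasurable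
  · filter_upwards with z
    rw [Real.norm_eq_abs]
    exact bound_f hL hlip θ z

omit hdiff' in
lemma int_fX (θ u : Esp) :
    Integrable (fun z => f (θ + z) * ∑ i, u i * z i) (gaussianPi (n+1) σ) := by
  refine Integrable.mono'
    (((int_S hσ).const_mul (|f θ| * ‖u‖)).add ((int_Q hσ).const_mul (L * ‖u‖ * (n+1)))) ?_ ?_
  · apply Continuous.aestronglyMeasurable
    exact (hlip.continuous.comp (continuous_const.add continuous_id)).mul
      (continuous_finset_sum _ fun i _ => (continuous_const.mul (PiLp.continuous_apply 2 _ i)))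
  · filter_upwards with z
    rw [Real.norm_eq_abs, abs_mul]
    have h1 := bound_f hL hlip θ z
    have h2 := X_abs_le u z
    have hS : (0:ℝ) ≤ ∑ i, |z i| := Finset.sum_nonneg fun i _ => abs_nonneg _
    have hSsq := S_sq_le z
    have hu : (0:ℝ) ≤ ‖u‖ := norm_nonneg u
    have habs : (0:ℝ) ≤ |f (θ + z)| := abs_nonneg _
    have habs2 : (0:ℝ) ≤ |∑ i, u i * z i| := abs_nonneg _
    simp only [Pi.add_apply]
    nlinarith [mul_le_mul h1 h2 habs2 (by positivity : (0:ℝ) ≤ |f θ| + L * ∑ i, |z i|),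
      mul_le_mul_of_nonneg_left (S_sq_le z) (by positivity : (0:ℝ) ≤ L * ‖u‖)]

omit hdiff' hlip in
lemma int_f_zi (θ : Esp) (i : Fin (n+1))
    (hint : Integrable (fun z => f (θ + z) * ∑ j, (EuclideanSpace.single i (1:ℝ)) j * z j)
      (gaussianPi (n+1) σ)) :
    Integrable (fun z => f (θ + z) * z i) (gaussianPi (n+1) σ) := by
  refine hint.congr ?_
  filter_upwards with z
  congr 1
  simp [EuclideanSpace.single_apply]

omit hdiff' in
lemma int_fderiv_apply (θ u : Esp) :
    Integrable (fun z => fderiv ℝ f (θ + z) u) (gaussianPi (n+1) σ) := by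
  refine Integrable.mono' (integrable_const (L * ‖u‖)) ?_ ?_
  · exact ((measurable_fderiv_apply_const ℝ f u).comp (measurable_id.const_add θ)).aestronglyMeasurable
  · filter_upwards with z
    calc ‖fderiv ℝ f (θ + z) u‖ ≤ ‖fderiv ℝ f (θ + z)‖ * ‖u‖ := (fderiv ℝ f (θ + z)).le_opNorm u
    _ ≤ L * ‖u‖ := by
        refine mul_le_mul_of_nonneg_right ?_ (norm_nonneg u)
        have := norm_fderiv_le_of_lipschitz ℝ hlip (x₀ := θ + z)
        rwa [Real.coe_toNNReal _ hL.le] at this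
omit hdiff' in
lemma int_fderiv (θ : Esp) :
    Integrable (fun z => fderiv ℝ f (θ + z)) (gaussianPi (n+1) σ) := by
  refine Integrable.mono' (integrable_const L) ?_ ?_
  · exact ((measurable_fderiv ℝ f).comp (measurable_id.const_add θ)).aestronglyMeasurable
  · filter_upwards with z
    have := norm_fderiv_le_of_lipschitz ℝ hlip (x₀ := θ + z)
    rwa [Real.coe_toNNReal _ hL.le] at this


lemma lemA (θ : Esp) :
    HasFDerivAt (fun θ : Esp => ∫ z, f (θ + z) ∂(gaussianPi (n+1) σ))
      (∫ z, fderiv ℝ f (θ + z) ∂(gaussianPi (n+1) σ)) θ := by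
  refine hasFDerivAt_integral_of_dominated_of_fderiv_le (𝕜 := ℝ) (s := Metric.ball θ 1)
    (bound := fun _ => L) (F' := fun θ' z => fderiv ℝ f (θ' + z))
    (Metric.ball_mem_nhds θ one_pos) ?_ ?_ ?_ ?_ ?_ ?_
  · filter_upwards with θ'
    exact (hlip.continuous.comp (continuous_const.add continuous_id)).aestronglyMeasurable
  · exact int_f hσ hL hlip θ
  · exact ((measurable_fderiv ℝ f).comp (measurable_id.const_add θ)).aestronglyMeasurable
  · filter_upwards with z
    intro θ' _
    have := norm_fderiv_le_of_lipschitz ℝ hlip (x₀ := θ' + z)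
    rwa [Real.coe_toNNReal _ hL.le] at this
  · exact integrable_const L
  · filter_upwards with z
    intro θ' _
    have h1 : HasFDerivAt (fun θ'' : Esp => θ'' + z) (ContinuousLinearMap.id ℝ Esp) θ' :=
      (hasFDerivAt_id θ').add_const z
    have h2 := (hdiff' (θ' + z)).hasFDerivAt.comp θ' h1
    simpa [Function.comp_def] using h2

end WithF

section WithF2

variable (hσ : 0 < σ) {K : NNReal} {f : EuclideanSpace ℝ (Fin (n+1)) → ℝ}
  (hdiff : Differentiable ℝ f) (hlip : LipschitzWith K f)

include hσ hdiff hlip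

/-- Coordinate-wise Gaussian integration by parts. -/
lemma lemB (θ : Esp) (i : Fin (n+1)) :
    ∫ z, fderiv ℝ f (θ + z) (EuclideanSpace.single i (1:ℝ)) ∂(gaussianPi (n+1) σ)
      = (σ ^ 2)⁻¹ * ∫ z, f (θ + z) * z i ∂(gaussianPi (n+1) σ) := by
  classical
  set Ei : Esp := EuclideanSpace.single i (1:ℝ) with hEi
  set e := (MeasurableEquiv.toLp 2 (Fin (n+1) → ℝ)).symm.trans
    (MeasurableEquiv.piFinSuccAbove (fun _ : Fin (n+1) => ℝ) i) with he
  have mp : MeasurePreserving e (gaussianPi (n+1) σ) ((μ1).prod (Measure.pi fun _ : Fin n => μ1)) := by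
    have h0 : MeasurePreserving (MeasurableEquiv.toLp 2 (Fin (n+1) → ℝ))
        (Measure.pi fun _ => μ1) (gaussianPi (n+1) σ) :=
      ⟨(MeasurableEquiv.toLp 2 (Fin (n+1) → ℝ)).measurable, rfl⟩
    exact (measurePreserving_piFinSuccAbove (fun _ : Fin (n+1) => μ1) i).comp (h0.symm _)
  set ν := Measure.pi fun _ : Fin n => μ1 with hν
  set G : Esp → ℝ := fun z => fderiv ℝ f (θ + z) Ei with hG
  set R : Esp → ℝ := fun z => f (θ + z) * z i with hR
  -- L-Lipschitz data
  have hLnn : LipschitzWith K f := hlip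
  -- integrability of G and R on γ
  have hK0 : (0:ℝ) < (K:ℝ) + 1 := by positivity
  have hlip' : LipschitzWith (Real.toNNReal ((K:ℝ) + 1)) f := by
    refine hlip.weaken ?_
    rw [← NNReal.coe_le_coe, Real.coe_toNNReal _ (by positivity)]
    simp
  have hGint : Integrable G (gaussianPi (n+1) σ) := int_fderiv_apply hσ hK0 hlip' θ Ei
  have hRint : Integrable R (gaussianPi (n+1) σ) :=
    int_f_zi hσ hK0 (f := f) θ i (int_fX hσ hK0 hlip' θ (EuclideanSpace.single i (1:ℝ)))
  -- transfer to the product measure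
  have hGp : Integrable (fun q => G (e.symm q)) ((μ1).prod ν) := by
    have := (mp.symm e).integrable_comp_emb (e.symm.measurableEmbedding) (g := G)
    exact this.mpr hGint
  have hRp : Integrable (fun q => R (e.symm q)) ((μ1).prod ν) := by
    have := (mp.symm e).integrable_comp_emb (e.symm.measurableEmbedding) (g := R)
    exact this.mpr hRint
  have hGtrans : ∫ z, G z ∂(gaussianPi (n+1) σ) = ∫ q, G (e.symm q) ∂((μ1).prod ν) :=
    ((mp.symm e).integral_comp' G).symm
  have hRtrans : ∫ z, R z ∂(gaussianPi (n+1) σ) = ∫ q, R (e.symm q) ∂((μ1).prod ν) :=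
    ((mp.symm e).integral_comp' R).symm
  -- Fubini
  have hGfub := integral_prod_symm (fun q => G (e.symm q)) hGp
  have hRfub := integral_prod_symm (fun q => R (e.symm q)) hRp
  -- symm application formula
  have hsymm : ∀ (x : ℝ) (w : Fin n → ℝ), e.symm (x, w) = iE (i.insertNth x w) := by
    intro x w
    rfl
  -- inner 1-d IBP for each w
  have hinner : ∀ w : Fin n → ℝ,
      ∫ x, G (e.symm (x, w)) ∂μ1 = (σ ^ 2)⁻¹ * ∫ x, R (e.symm (x, w)) ∂μ1 := by
    intro w
    set c : Esp := θ + iE (i.insertNth 0 w) with hc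
    have hins : ∀ x : ℝ, θ + iE (i.insertNth x w) = c + x • Ei := by
      intro x
      rw [hc, add_assoc]
      congr 1
      ext j
      by_cases h : j = i
      · subst h
        simp [iE, Ei, PiLp.add_apply, PiLp.smul_apply, EuclideanSpace.single_apply]
      · obtain ⟨j', rfl⟩ := Fin.exists_succAbove_eq (x := j) (y := i) h
        simp [iE, Ei, PiLp.add_apply, PiLp.smul_apply, EuclideanSpace.single_apply,
          Fin.succAbove_ne i j']
    set gw : ℝ → ℝ := fun x => f (c + x • Ei) with hgw
    have haff : LipschitzWith 1 (fun x : ℝ => c + x • Ei) := by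
      refine LipschitzWith.of_dist_le_mul fun x y => ?_
      rw [dist_eq_norm, dist_eq_norm]
      have : c + x • Ei - (c + y • Ei) = (x - y) • Ei := by
        rw [sub_smul]; abel
      rw [this, norm_smul, hEi, EuclideanSpace.norm_single]
      simp
    have hgwlip : LipschitzWith (K * 1) gw := hLnn.comp haff
    have hgwdiff : Differentiable ℝ gw := by
      intro x
      have h1 : HasDerivAt (fun x : ℝ => c + x • Ei) Ei x := by
        simpa using ((hasDerivAt_id x).smul_const Ei).const_add c
      exact ((hdiff _).hasFDerivAt.comp_hasDerivAt x h1).differentiableAt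
    have hderiv : ∀ x : ℝ, deriv gw x = fderiv ℝ f (c + x • Ei) Ei := by
      intro x
      have h1 : HasDerivAt (fun x : ℝ => c + x • Ei) Ei x := by
        simpa using ((hasDerivAt_id x).smul_const Ei).const_add c
      exact ((hdiff _).hasFDerivAt.comp_hasDerivAt x h1).deriv
    have hibp := ibp1 (K := K * 1) hσ hgwdiff hgwlip
    have hGeq : ∀ x : ℝ, G (e.symm (x, w)) = deriv gw x := by
      intro x
      rw [hsymm x w, hG]
      simp only
      rw [hins x, hderiv x]
    have hReq : ∀ x : ℝ, R (e.symm (x, w)) = gw x * x := by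
      intro x
      rw [hsymm x w, hR]
      simp only
      rw [hins x]
      congr 1
      simp [iE]
    calc ∫ x, G (e.symm (x, w)) ∂μ1 = ∫ x, deriv gw x ∂μ1 := by
          congr 1; funext x; exact hGeq x
    _ = (σ ^ 2)⁻¹ * ∫ x, gw x * x ∂μ1 := hibp
    _ = (σ ^ 2)⁻¹ * ∫ x, R (e.symm (x, w)) ∂μ1 := by
          congr 1; congr 1; funext x; exact (hReq x).symm
  calc ∫ z, G z ∂(gaussianPi (n+1) σ)
      = ∫ w, ∫ x, G (e.symm (x, w)) ∂μ1 ∂ν := by rw [hGtrans, hGfub]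
  _ = ∫ w, (σ ^ 2)⁻¹ * ∫ x, R (e.symm (x, w)) ∂μ1 ∂ν := by
      congr 1; funext w; exact hinner w
  _ = (σ ^ 2)⁻¹ * ∫ w, ∫ x, R (e.symm (x, w)) ∂μ1 ∂ν := integral_const_mul _ _
  _ = (σ ^ 2)⁻¹ * ∫ z, R z ∂(gaussianPi (n+1) σ) := by rw [hRtrans, hRfub]

end WithF2

section Key

variable (hσ : 0 < σ) (hL : 0 < L) {f : EuclideanSpace ℝ (Fin (n+1)) → ℝ}
  (hdiff : Differentiable ℝ f) (hlip : LipschitzWith (Real.toNNReal L) f)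

include hσ hL hdiff hlip

lemma key (θ u : Esp) :
    (∫ z, fderiv ℝ f (θ + z) ∂(gaussianPi (n+1) σ)) u
      = (σ ^ 2)⁻¹ * ∫ z, f (θ + z) * ∑ i, u i * z i ∂(gaussianPi (n+1) σ) := by
  classical
  have hint_i : ∀ i : Fin (n+1), Integrable (fun z => f (θ + z) * z i) (gaussianPi (n+1) σ) :=
    fun i => int_f_zi hσ hL θ i (int_fX hσ hL hlip θ _)
  rw [ContinuousLinearMap.integral_apply (int_fderiv hσ hL hlip θ) u]
  have hu : ∑ i, u i • EuclideanSpace.single i (1:ℝ) = u := by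
    have := (EuclideanSpace.basisFun (Fin (n+1)) ℝ).sum_repr u
    simpa [EuclideanSpace.basisFun_apply, EuclideanSpace.basisFun_repr] using this
  have step1 : (fun z : Esp => fderiv ℝ f (θ + z) u)
      = fun z => ∑ i, u i * fderiv ℝ f (θ + z) (EuclideanSpace.single i (1:ℝ)) := by
    funext z
    conv_lhs => rw [← hu]
    rw [map_sum]
    congr 1
    funext i
    rw [ContinuousLinearMap.map_smul, smul_eq_mul]
  rw [step1, integral_finset_sum _
    (fun i _ => (int_fderiv_apply hσ hL hlip θ _).const_mul (u i))]
  have step2 : ∀ i : Fin (n+1),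
      ∫ z, u i * fderiv ℝ f (θ + z) (EuclideanSpace.single i (1:ℝ)) ∂(gaussianPi (n+1) σ)
        = (σ ^ 2)⁻¹ * ∫ z, f (θ + z) * (u i * z i) ∂(gaussianPi (n+1) σ) := by
    intro i
    rw [integral_const_mul, lemB hσ hdiff hlip θ i]
    rw [show (fun z : Esp => f (θ + z) * (u i * z i)) = fun z => u i * (f (θ + z) * z i) by
      funext z; ring]
    rw [integral_const_mul]
    ring
  rw [Finset.sum_congr rfl (fun i _ => step2 i), ← Finset.mul_sum]
  congr 1
  have hswap : ∫ z, f (θ + z) * ∑ i, u i * z i ∂(gaussianPi (n+1) σ)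
      = ∑ i, ∫ z, f (θ + z) * (u i * z i) ∂(gaussianPi (n+1) σ) := by
    rw [show (fun z : Esp => f (θ + z) * ∑ i, u i * z i)
        = fun z => ∑ i, f (θ + z) * (u i * z i) by
      funext z; rw [Finset.mul_sum]]
    refine integral_finset_sum _ (fun i _ => ?_)
    refine ((hint_i i).const_mul (u i)).congr ?_
    filter_upwards with z
    ring
  rw [hswap]

end Key

section Moments

lemma lin_diff (u : Esp) : Differentiable ℝ (fun z : Esp => ∑ i, u i * z i) := by
  have : (fun z : Esp => ∑ i, u i * z i) = fun z => (innerSL ℝ u) z := by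
    funext z
    rw [innerSL_apply_apply, PiLp.inner_apply]
    congr 1; funext i; simp [mul_comm]
  rw [this]
  exact (innerSL ℝ u).differentiable

lemma lin_lip (u : Esp) : LipschitzWith (Real.toNNReal (‖u‖ + 1))
    (fun z : Esp => ∑ i, u i * z i) := by
  have h1 : (fun z : Esp => ∑ i, u i * z i) = fun z => (innerSL ℝ u) z := by
    funext z
    rw [innerSL_apply_apply, PiLp.inner_apply]
    congr 1; funext i; simp [mul_comm]
  rw [h1]
  refine ((innerSL ℝ u).lipschitz).weaken ?_
  rw [← NNReal.coe_le_coe, coe_nnnorm, Real.coe_toNNReal _ (by positivity)]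
  calc ‖innerSL ℝ u‖ = ‖u‖ := innerSL_apply_norm ℝ u
  _ ≤ ‖u‖ + 1 := by linarith

lemma lin_fderiv (u : Esp) (z : Esp) (i : Fin (n+1)) :
    fderiv ℝ (fun z : Esp => ∑ i, u i * z i) z (EuclideanSpace.single i (1:ℝ)) = u i := by
  have h1 : (fun z : Esp => ∑ i, u i * z i) = fun z => (innerSL ℝ u) z := by
    funext z
    rw [innerSL_apply_apply, PiLp.inner_apply]
    congr 1; funext i; simp [mul_comm]
  rw [h1]
  rw [show (fun z : Esp => (innerSL ℝ u) z) = ⇑(innerSL ℝ u) from rfl,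
    ContinuousLinearMap.fderiv, innerSL_apply_apply, PiLp.inner_apply]
  simp [EuclideanSpace.single_apply]

variable (hσ : 0 < σ)
include hσ

lemma int_lin (u : Esp) :
    Integrable (fun z : Esp => ∑ i, u i * z i) (gaussianPi (n+1) σ) := by
  refine Integrable.mono' ((int_S hσ).const_mul ‖u‖) ?_ ?_
  · exact (continuous_finset_sum _ fun i _ =>
      (continuous_const.mul (PiLp.continuous_apply 2 _ i))).aestronglyMeasurable
  · filter_upwards with z
    rw [Real.norm_eq_abs]
    exact X_abs_le u z

lemma int_lin_sq (u : Esp) :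
    Integrable (fun z : Esp => (∑ i, u i * z i) ^ 2) (gaussianPi (n+1) σ) := by
  refine Integrable.mono' ((int_Q hσ).const_mul (‖u‖ ^ 2 * (n+1))) ?_ ?_
  · exact ((continuous_finset_sum _ fun i _ =>
      (continuous_const.mul (PiLp.continuous_apply 2 _ i))).pow 2).aestronglyMeasurable
  · filter_upwards with z
    rw [Real.norm_eq_abs, abs_of_nonneg (sq_nonneg _), ← sq_abs]
    have h2 := X_abs_le u z
    have hS : (0:ℝ) ≤ ∑ i, |z i| := Finset.sum_nonneg fun i _ => abs_nonneg _
    have h3 := S_sq_le z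
    have h4 := pow_le_pow_left₀ (abs_nonneg (∑ i, u i * z i)) h2 2
    rw [mul_pow] at h4
    nlinarith [abs_nonneg (∑ i, u i * z i), norm_nonneg u, sq_nonneg ‖u‖]

lemma moment1 (u : Esp) (i : Fin (n+1)) :
    ∫ z, (∑ j, u j * z j) * z i ∂(gaussianPi (n+1) σ) = σ ^ 2 * u i := by
  have hb := lemB hσ (lin_diff u) (lin_lip u) 0 i
  have hL : ∫ z, fderiv ℝ (fun z : Esp => ∑ j, u j * z j) ((0:Esp) + z)
      (EuclideanSpace.single i (1:ℝ)) ∂(gaussianPi (n+1) σ) = u i := by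
    rw [show (fun z : Esp => fderiv ℝ (fun z : Esp => ∑ j, u j * z j) ((0:Esp) + z)
        (EuclideanSpace.single i (1:ℝ))) = fun _ => u i by
      funext z; rw [lin_fderiv u ((0:Esp) + z) i]]
    simp
  rw [hL] at hb
  have hσ2 : (σ:ℝ) ^ 2 ≠ 0 := by positivity
  have : ∫ z, (fun z : Esp => ∑ j, u j * z j) ((0:Esp) + z) * z i ∂(gaussianPi (n+1) σ)
      = ∫ z, (∑ j, u j * z j) * z i ∂(gaussianPi (n+1) σ) := by
    congr 1
    funext z
    rw [zero_add]
  rw [this] at hb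
  field_simp at hb
  linarith

lemma int_lin_zi (u : Esp) (i : Fin (n+1)) :
    Integrable (fun z : Esp => (∑ j, u j * z j) * z i) (gaussianPi (n+1) σ) := by
  have h := int_f_zi (f := fun z : Esp => ∑ j, u j * z j) hσ
    (by positivity : (0:ℝ) < ‖u‖ + 1) (0:Esp) i
    (int_fX hσ (by positivity) (lin_lip u) 0 (EuclideanSpace.single i (1:ℝ)))
  refine h.congr ?_
  filter_upwards with z
  rw [zero_add]

lemma moment2 (u : Esp) :
    ∫ z, (∑ i, u i * z i) ^ 2 ∂(gaussianPi (n+1) σ) = σ ^ 2 * ‖u‖ ^ 2 := by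
  classical
  have hre : (fun z : Esp => (∑ i, u i * z i) ^ 2)
      = fun z => ∑ i, u i * ((∑ j, u j * z j) * z i) := by
    funext z
    rw [sq, Finset.mul_sum]
    congr 1
    funext i
    ring
  rw [hre, integral_finset_sum _ (fun i _ => (int_lin_zi hσ u i).const_mul (u i))]
  have : ∀ i : Fin (n+1), ∫ z, u i * ((∑ j, u j * z j) * z i) ∂(gaussianPi (n+1) σ)
      = u i * (σ ^ 2 * u i) := by
    intro i
    rw [integral_const_mul, moment1 hσ u i]
  rw [Finset.sum_congr rfl (fun i _ => this i)]
  have hnorm : ‖u‖ ^ 2 = ∑ i, (u i) ^ 2 := by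
    rw [EuclideanSpace.norm_eq, Real.sq_sqrt (by positivity)]
    simp [Real.norm_eq_abs, sq_abs]
  rw [hnorm, Finset.mul_sum]
  congr 1
  funext i
  ring

lemma absmoment (u : Esp) :
    ∫ z, |∑ i, u i * z i| ∂(gaussianPi (n+1) σ) ≤ σ * ‖u‖ := by
  by_cases hu : u = 0
  · subst hu
    simp
  · have hun : (0:ℝ) < ‖u‖ := norm_pos_iff.mpr hu
    set t : ℝ := σ * ‖u‖ with ht
    have htpos : 0 < t := by positivity
    have hpt : ∀ z : Esp, |∑ i, u i * z i| ≤ (∑ i, u i * z i) ^ 2 / (2 * t) + t / 2 := by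
      intro z
      have h := sq_nonneg (|∑ i, u i * z i| - t)
      have h2t : 2 * t * |∑ i, u i * z i| ≤ (∑ i, u i * z i) ^ 2 + t ^ 2 := by
        nlinarith [sq_abs (∑ i, u i * z i)]
      calc |∑ i, u i * z i| = (2 * t * |∑ i, u i * z i|) / (2 * t) := by
            field_simp
      _ ≤ ((∑ i, u i * z i) ^ 2 + t ^ 2) / (2 * t) :=
            (div_le_div_iff_of_pos_right (by positivity)).mpr h2t
      _ = (∑ i, u i * z i) ^ 2 / (2 * t) + t / 2 := by
            field_simp
    have hInt1 : Integrable (fun z : Esp => |∑ i, u i * z i|) (gaussianPi (n+1) σ) :=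
      (int_lin hσ u).abs
    have hInt2 : Integrable (fun z : Esp => (∑ i, u i * z i) ^ 2 / (2 * t) + t / 2)
        (gaussianPi (n+1) σ) := by
      refine Integrable.add ?_ (integrable_const _)
      exact (int_lin_sq hσ u).div_const _
    calc ∫ z, |∑ i, u i * z i| ∂(gaussianPi (n+1) σ)
        ≤ ∫ z, ((∑ i, u i * z i) ^ 2 / (2 * t) + t / 2) ∂(gaussianPi (n+1) σ) := by
          refine integral_mono hInt1 hInt2 ?_
          intro z
          exact hpt z
    _ = (∫ z, (∑ i, u i * z i) ^ 2 ∂(gaussianPi (n+1) σ)) / (2 * t) + t / 2 := by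
          rw [integral_add ((int_lin_sq hσ u).div_const _) (integrable_const _),
            integral_div, integral_const]
          simp
    _ = σ ^ 2 * ‖u‖ ^ 2 / (2 * (σ * ‖u‖)) + σ * ‖u‖ / 2 := by rw [moment2 hσ u, ht]
    _ = σ * ‖u‖ := by
          field_simp
          ring
end Moments
end Multi
end GaussSmooth

/-- **Smoothness of Gaussian randomized smoothing.**  If
`f : EuclideanSpace ℝ (Fin d) → ℝ` is differentiable and `L`-Lipschitz, then
its Gaussian smoothing `f̄(θ) = ∫ f(θ + z) dγ_σ(z)` is differentiable and its
gradient is `(L/σ)`-Lipschitz. -/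
theorem gaussian_smoothing_gradient_lipschitz
    (d : ℕ) (L σ : ℝ) (hL : 0 < L) (hσ : 0 < σ)
    (f : EuclideanSpace ℝ (Fin d) → ℝ)
    (hdiff : Differentiable ℝ f)
    (hlip : LipschitzWith (Real.toNNReal L) f) :
    Differentiable ℝ (fun θ : EuclideanSpace ℝ (Fin d) => ∫ z, f (θ + z) ∂(gaussianPi d σ)) ∧
      ∀ a b : EuclideanSpace ℝ (Fin d),
        ‖gradient (fun θ : EuclideanSpace ℝ (Fin d) => ∫ z, f (θ + z) ∂(gaussianPi d σ)) a -
            gradient (fun θ : EuclideanSpace ℝ (Fin d) => ∫ z, f (θ + z) ∂(gaussianPi d σ)) b‖ ≤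
          (L / σ) * ‖a - b‖ := by
  constructor
  · cases d with
    | zero =>
      have hconst : (fun θ : EuclideanSpace ℝ (Fin 0) => ∫ z, f (θ + z) ∂(gaussianPi 0 σ))
          = fun _ => ∫ z, f ((0 : EuclideanSpace ℝ (Fin 0)) + z) ∂(gaussianPi 0 σ) := by
        funext θ
        have hθ : θ = 0 := Subsingleton.elim _ _
        rw [hθ]
      rw [hconst]
      exact differentiable_const _
    | succ n =>
      intro θ
      exact (GaussSmooth.lemA hσ hL hdiff hlip θ).differentiableAt
  · intro a b
    cases d with
    | zero =>
      have hab : a = b := Subsingleton.elim a b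
      subst hab
      simp only [sub_self, norm_zero]
      positivity
    | succ n =>
      set γ := gaussianPi (n+1) σ with hγ
      set F := fun θ : EuclideanSpace ℝ (Fin (n+1)) => ∫ z, f (θ + z) ∂γ with hF
      have hFd : ∀ θ, HasFDerivAt F (∫ z, fderiv ℝ f (θ + z) ∂γ) θ :=
        fun θ => GaussSmooth.lemA hσ hL hdiff hlip θ
      have hgrad : ∀ (θ w : EuclideanSpace ℝ (Fin (n+1))),
          (inner ℝ (gradient F θ) w : ℝ)
            = (σ ^ 2)⁻¹ * ∫ z, f (θ + z) * ∑ i, w i * z i ∂γ := by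
        intro θ w
        have h1 : HasGradientAt F (gradient F θ) θ :=
          ((hFd θ).differentiableAt).hasGradientAt
        have h2 := hasGradientAt_iff_hasFDerivAt.mp h1
        have h3 := h2.unique (hFd θ)
        calc (inner ℝ (gradient F θ) w : ℝ)
            = (InnerProductSpace.toDual ℝ _) (gradient F θ) w :=
              (InnerProductSpace.toDual_apply_apply).symm
        _ = (∫ z, fderiv ℝ f (θ + z) ∂γ) w := by rw [h3]
        _ = (σ ^ 2)⁻¹ * ∫ z, f (θ + z) * ∑ i, w i * z i ∂γ :=
              GaussSmooth.key hσ hL hdiff hlip θ w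
      set g := gradient F a - gradient F b with hg
      have hsub : (inner ℝ g g : ℝ)
          = (σ ^ 2)⁻¹ * ∫ z, (f (a + z) - f (b + z)) * ∑ i, g i * z i ∂γ := by
        rw [hg, inner_sub_left, hgrad a g, hgrad b g, ← mul_sub]
        congr 1
        rw [← integral_sub (GaussSmooth.int_fX hσ hL hlip a g)
          (GaussSmooth.int_fX hσ hL hlip b g)]
        congr 1
        funext z
        ring
      have hIdiff : Integrable (fun z => (f (a + z) - f (b + z)) * ∑ i, g i * z i) γ := by
        refine ((GaussSmooth.int_fX hσ hL hlip a g).sub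
          (GaussSmooth.int_fX hσ hL hlip b g)).congr ?_
        filter_upwards with z
        simp only [Pi.sub_apply]
        ring
      have hptw : ∀ z : EuclideanSpace ℝ (Fin (n+1)),
          ‖(f (a + z) - f (b + z)) * ∑ i, g i * z i‖ ≤ L * ‖a - b‖ * |∑ i, g i * z i| := by
        intro z
        rw [Real.norm_eq_abs, abs_mul]
        refine mul_le_mul_of_nonneg_right ?_ (abs_nonneg _)
        have h := hlip.dist_le_mul (a + z) (b + z)
        rw [Real.coe_toNNReal _ hL.le, Real.dist_eq] at h
        have hd : dist (a + z) (b + z) = ‖a - b‖ := by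
          rw [dist_eq_norm]
          congr 1
          abel
        rwa [hd] at h
      have habs1 : |∫ z, (f (a + z) - f (b + z)) * ∑ i, g i * z i ∂γ|
          ≤ L * ‖a - b‖ * ∫ z, |∑ i, g i * z i| ∂γ := by
        calc |∫ z, (f (a + z) - f (b + z)) * ∑ i, g i * z i ∂γ|
            ≤ ∫ z, ‖(f (a + z) - f (b + z)) * ∑ i, g i * z i‖ ∂γ := by
              rw [← Real.norm_eq_abs]
              exact norm_integral_le_integral_norm _
        _ ≤ ∫ z, L * ‖a - b‖ * |∑ i, g i * z i| ∂γ := by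
              refine integral_mono hIdiff.norm
                (((GaussSmooth.int_lin hσ g).abs).const_mul _) ?_
              intro z
              exact hptw z
        _ = L * ‖a - b‖ * ∫ z, |∑ i, g i * z i| ∂γ := integral_const_mul _ _
      have habs2 : ∫ z, |∑ i, g i * z i| ∂γ ≤ σ * ‖g‖ := GaussSmooth.absmoment hσ g
      have hfin : ‖g‖ ^ 2 ≤ (L / σ) * ‖a - b‖ * ‖g‖ := by
        rw [← real_inner_self_eq_norm_sq, hsub]
        have hσ2 : (0:ℝ) < (σ ^ 2)⁻¹ := by positivity
        have hc1 : (σ ^ 2)⁻¹ * ∫ z, (f (a + z) - f (b + z)) * ∑ i, g i * z i ∂γ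
            ≤ (σ ^ 2)⁻¹ * (L * ‖a - b‖ * (σ * ‖g‖)) := by
          refine mul_le_mul_of_nonneg_left ?_ hσ2.le
          calc ∫ z, (f (a + z) - f (b + z)) * ∑ i, g i * z i ∂γ
              ≤ |∫ z, (f (a + z) - f (b + z)) * ∑ i, g i * z i ∂γ| := le_abs_self _
          _ ≤ L * ‖a - b‖ * ∫ z, |∑ i, g i * z i| ∂γ := habs1
          _ ≤ L * ‖a - b‖ * (σ * ‖g‖) := by
                refine mul_le_mul_of_nonneg_left habs2 ?_
                positivity
        refine hc1.trans_eq ?_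
        have hσ0 : (σ:ℝ) ≠ 0 := hσ.ne'
        field_simp
      rcases eq_or_lt_of_le (norm_nonneg g) with h0 | h0
      · rw [← h0]
        positivity
      · nlinarith [hfin, h0]
end

section
/- Differential privacy of the Gaussian mechanism (Theorem 1). Let d ∈ ℕ, σ > 0, S > 0 and ε > 0. Let a, a' : Fin d → ℝ satisfy (Σ_{i < d} (a i − a' i)²)^{1/2} ≤ S. Set μ = S/σ and δ = Φ(−ε/μ + μ/2) − e^ε·Φ(−ε/μ − μ/2). Then for every measurable set R ⊆ (Fin d → ℝ), the product Gaussian measures P_a = Measure.pi (fun i ↦ gaussianReal (a i) σ²) and P_{a'} = Measure.pi (fun i ↦ gaussianReal (a' i) σ²) satisfy P_a(R) ≤ e^ε·P_{a'}(R) + δ. -/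
open MeasureTheory ProbabilityTheory Finset

section GaussDPAux
open Real
open scoped NNReal ENNReal

namespace GaussDP


lemma pdf_conv_pointwise (m₁ m₂ : ℝ) (V₁ V₂ : ℝ≥0) (hV₁ : V₁ ≠ 0) (hV₂ : V₂ ≠ 0) (t x : ℝ) :
    gaussianPDFReal m₁ V₁ x * gaussianPDFReal m₂ V₂ (t - x) =
      gaussianPDFReal (m₁ + m₂) (V₁ + V₂) t *
        gaussianPDFReal ((m₁ * V₂ + (t - m₂) * V₁) / (V₁ + V₂)) (V₁ * V₂ / (V₁ + V₂)) x := by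
  have h1 : (0:ℝ) < V₁ := lt_of_le_of_ne V₁.coe_nonneg (by exact_mod_cast (Ne.symm hV₁))
  have h2 : (0:ℝ) < V₂ := lt_of_le_of_ne V₂.coe_nonneg (by exact_mod_cast (Ne.symm hV₂))
  have h12 : (0:ℝ) < (V₁:ℝ) + V₂ := by linarith
  simp only [gaussianPDFReal, NNReal.coe_add, NNReal.coe_mul, NNReal.coe_div]
  rw [mul_mul_mul_comm, mul_mul_mul_comm ((√(2 * π * ((V₁:ℝ) + V₂)))⁻¹), ← Real.exp_add,
    ← Real.exp_add]
  congr 1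
  · rw [← mul_inv, ← mul_inv, ← Real.sqrt_mul (by positivity), ← Real.sqrt_mul (by positivity)]
    congr 2
    field_simp
  · congr 1
    field_simp
    ring






lemma lintegral_pdf_conv (m₁ m₂ : ℝ) (V₁ V₂ : ℝ≥0) (hV₁ : V₁ ≠ 0) (hV₂ : V₂ ≠ 0) (t : ℝ) :
    ∫⁻ x, gaussianPDF m₁ V₁ x * gaussianPDF m₂ V₂ (t - x) =
      gaussianPDF (m₁ + m₂) (V₁ + V₂) t := by
  have hW : V₁ * V₂ / (V₁ + V₂) ≠ 0 := by
    simp [div_eq_zero_iff, hV₁, hV₂, add_eq_zero]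
  calc ∫⁻ x, gaussianPDF m₁ V₁ x * gaussianPDF m₂ V₂ (t - x)
      = ∫⁻ x, gaussianPDF (m₁ + m₂) (V₁ + V₂) t *
          gaussianPDF ((m₁ * V₂ + (t - m₂) * V₁) / (V₁ + V₂)) (V₁ * V₂ / (V₁ + V₂)) x := by
        congr 1; funext x
        simp only [gaussianPDF]
        rw [← ENNReal.ofReal_mul (gaussianPDFReal_nonneg _ _ _),
          ← ENNReal.ofReal_mul (gaussianPDFReal_nonneg _ _ _),
          pdf_conv_pointwise m₁ m₂ V₁ V₂ hV₁ hV₂ t x]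
    _ = gaussianPDF (m₁ + m₂) (V₁ + V₂) t * ∫⁻ x,
          gaussianPDF ((m₁ * V₂ + (t - m₂) * V₁) / (V₁ + V₂)) (V₁ * V₂ / (V₁ + V₂)) x := by
        rw [lintegral_const_mul _ (measurable_gaussianPDF _ _)]
    _ = gaussianPDF (m₁ + m₂) (V₁ + V₂) t := by
        rw [lintegral_gaussianPDF_eq_one _ hW, mul_one]

lemma gaussian_conv (m₁ m₂ : ℝ) (V₁ V₂ : ℝ≥0) :
    Measure.map (fun p : ℝ × ℝ => p.1 + p.2)
      ((gaussianReal m₁ V₁).prod (gaussianReal m₂ V₂)) = gaussianReal (m₁ + m₂) (V₁ + V₂) := by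
  by_cases hV₁ : V₁ = 0
  · rw [hV₁, gaussianReal_zero_var, Measure.dirac_prod,
      Measure.map_map measurable_add measurable_prodMk_left, zero_add]
    have h : ((fun p : ℝ × ℝ => p.1 + p.2) ∘ Prod.mk m₁) = (m₁ + ·) := rfl
    rw [h, gaussianReal_map_const_add, add_comm]
  by_cases hV₂ : V₂ = 0
  · rw [hV₂, gaussianReal_zero_var, Measure.prod_dirac,
      Measure.map_map measurable_add measurable_prodMk_right, add_zero]
    have h : ((fun p : ℝ × ℝ => p.1 + p.2) ∘ (fun x => (x, m₂))) = (· + m₂) := rfl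
    rw [h, gaussianReal_map_add_const]
  -- main case
  ext s hs
  rw [Measure.map_apply measurable_add hs,
    Measure.prod_apply (hs.preimage measurable_add),
    gaussianReal_of_var_ne_zero m₁ hV₁, gaussianReal_of_var_ne_zero m₂ hV₂]
  have hind : ∀ x : ℝ, (volume.withDensity (gaussianPDF m₂ V₂))
      (Prod.mk x ⁻¹' ((fun p : ℝ × ℝ => p.1 + p.2) ⁻¹' s)) =
      ∫⁻ z, s.indicator (fun _ => (1:ℝ≥0∞)) z * gaussianPDF m₂ V₂ (z - x) := by
    intro x
    have hpre : (Prod.mk x ⁻¹' ((fun p : ℝ × ℝ => p.1 + p.2) ⁻¹' s)) = (fun y => x + y) ⁻¹' s := by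
      ext y; simp
    rw [hpre, withDensity_apply _ (hs.preimage (measurable_const_add x)),
      ← lintegral_indicator (hs.preimage (measurable_const_add x))]
    have : ∀ y : ℝ, ((fun y => x + y) ⁻¹' s).indicator (gaussianPDF m₂ V₂) y
        = (fun z => s.indicator (fun _ => (1:ℝ≥0∞)) z * gaussianPDF m₂ V₂ (z - x)) (x + y) := by
      intro y
      by_cases hy : x + y ∈ s <;> simp [Set.indicator, hy, add_sub_cancel_left]
    simp_rw [this]
    exact lintegral_add_left_eq_self (μ := (volume : Measure ℝ))
      (fun z => s.indicator (fun _ => (1:ℝ≥0∞)) z * gaussianPDF m₂ V₂ (z - x)) x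
  simp_rw [hind]
  have hmind : Measurable (s.indicator (fun _ => (1:ℝ≥0∞))) := measurable_const.indicator hs
  have hm1 : Measurable (gaussianPDF m₁ V₁) := measurable_gaussianPDF _ _
  have hm2 : Measurable (gaussianPDF m₂ V₂) := measurable_gaussianPDF _ _
  rw [lintegral_withDensity_eq_lintegral_mul _ (measurable_gaussianPDF _ _) (by
    apply Measurable.lintegral_prod_right'
      (f := fun q : ℝ × ℝ => s.indicator (fun _ => (1:ℝ≥0∞)) q.2 * gaussianPDF m₂ V₂ (q.2 - q.1))
    exact (hmind.comp measurable_snd).mul (hm2.comp (measurable_snd.sub measurable_fst)))]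
  simp only [Pi.mul_apply]
  calc ∫⁻ x, gaussianPDF m₁ V₁ x * ∫⁻ z, s.indicator (fun _ => (1:ℝ≥0∞)) z *
          gaussianPDF m₂ V₂ (z - x)
      = ∫⁻ x, ∫⁻ z, s.indicator (fun _ => (1:ℝ≥0∞)) z *
          (gaussianPDF m₁ V₁ x * gaussianPDF m₂ V₂ (z - x)) := by
        congr 1; funext x
        have h3 : Measurable fun z : ℝ =>
            s.indicator (fun _ => (1:ℝ≥0∞)) z * gaussianPDF m₂ V₂ (z - x) :=
          hmind.mul (hm2.comp (measurable_id.sub measurable_const))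
        rw [← lintegral_const_mul _ h3]
        congr 1; funext z; ring
    _ = ∫⁻ z, ∫⁻ x, s.indicator (fun _ => (1:ℝ≥0∞)) z *
          (gaussianPDF m₁ V₁ x * gaussianPDF m₂ V₂ (z - x)) := by
        apply lintegral_lintegral_swap
        apply Measurable.aemeasurable
        apply Measurable.mul
        · exact hmind.comp measurable_snd
        · exact (hm1.comp measurable_fst).mul (hm2.comp (measurable_snd.sub measurable_fst))
    _ = ∫⁻ z, s.indicator (fun _ => (1:ℝ≥0∞)) z * gaussianPDF (m₁ + m₂) (V₁ + V₂) z := by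
        congr 1; funext z
        have h4 : Measurable fun x : ℝ => gaussianPDF m₁ V₁ x * gaussianPDF m₂ V₂ (z - x) :=
          hm1.mul (hm2.comp (measurable_const.sub measurable_id))
        rw [lintegral_const_mul _ h4, lintegral_pdf_conv m₁ m₂ V₁ V₂ hV₁ hV₂ z]
    _ = gaussianReal (m₁ + m₂) (V₁ + V₂) s := by
        rw [gaussianReal_apply _ (by simp [add_eq_zero, hV₁, hV₂]) s, ← lintegral_indicator hs]
        congr 1; funext z
        by_cases hz : z ∈ s <;> simp [Set.indicator, hz]






lemma map_affine' (k b m : ℝ) (v : ℝ≥0) :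
    Measure.map (fun t => k * t + b) (gaussianReal m v) =
      gaussianReal (k * m + b) ((k ^ 2).toNNReal * v) := by
  have h0 : (fun t : ℝ => k * t + b) = (· + b) ∘ (k * ·) := rfl
  rw [h0, ← Measure.map_map (measurable_add_const b) (measurable_const_mul k),
    gaussianReal_map_const_mul, gaussianReal_map_add_const]
  congr 1
  exact congrArg (· * v) (NNReal.coe_injective (by simp [Real.coe_toNNReal _ (sq_nonneg k)]))

lemma lintegral_pi_prod : ∀ (n : ℕ) (μ : Fin n → Measure ℝ), (∀ i, IsProbabilityMeasure (μ i)) →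
    ∀ (f : Fin n → ℝ → ℝ≥0∞), (∀ i, Measurable (f i)) →
    ∫⁻ x, ∏ i, f i (x i) ∂(Measure.pi μ) = ∏ i, ∫⁻ t, f i t ∂(μ i) := by
  intro n
  induction n with
  | zero =>
    intro μ hμ f hf
    simp only [univ_eq_empty, prod_empty, lintegral_one]
    have : IsProbabilityMeasure (Measure.pi μ) := inferInstance
    simp
  | succ n ih =>
    intro μ hμ f hf
    have hF : Measurable (fun p : ℝ × (Fin n → ℝ) => f 0 p.1 * ∏ j : Fin n, f j.succ (p.2 j)) := by
      apply Measurable.mul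
      · exact (hf 0).comp measurable_fst
      · exact Finset.measurable_prod _ fun j _ =>
          ((hf j.succ).comp ((measurable_pi_apply j).comp measurable_snd))
    have h0 := (measurePreserving_piFinSuccAbove μ 0).lintegral_comp
      (f := fun p : ℝ × (Fin n → ℝ) => f 0 p.1 * ∏ j : Fin n, f j.succ (p.2 j)) hF
    have heq : ∀ x : Fin (n+1) → ℝ,
        (fun p : ℝ × (Fin n → ℝ) => f 0 p.1 * ∏ j : Fin n, f j.succ (p.2 j))
          (MeasurableEquiv.piFinSuccAbove (fun _ => ℝ) 0 x) = ∏ i, f i (x i) := by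
      intro x
      rw [Fin.prod_univ_succ]
      rfl
    calc ∫⁻ x, ∏ i, f i (x i) ∂(Measure.pi μ)
        = ∫⁻ p : ℝ × (Fin n → ℝ), f 0 p.1 * ∏ j : Fin n, f j.succ (p.2 j)
            ∂((μ 0).prod (Measure.pi fun j => μ ((0 : Fin (n+1)).succAbove j))) := by
          rw [← h0]; exact lintegral_congr fun x => (heq x).symm
      _ = (∫⁻ t, f 0 t ∂(μ 0)) * ∫⁻ y, ∏ j : Fin n, f j.succ (y j)
            ∂(Measure.pi fun j => μ ((0 : Fin (n+1)).succAbove j)) :=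
          lintegral_prod_mul ((hf 0).aemeasurable) (Finset.measurable_prod _ fun (j : Fin n) _ =>
            ((hf j.succ).comp (measurable_pi_apply j))).aemeasurable
      _ = ∏ i, ∫⁻ t, f i t ∂(μ i) := by
          simp only [Fin.succAbove_zero]
          rw [ih (fun j => μ j.succ) (fun j => hμ j.succ) (fun j => f j.succ)
            (fun j => hf j.succ), Fin.prod_univ_succ]

lemma map_sum_pi : ∀ (n : ℕ) (μ : Fin n → Measure ℝ), (∀ i, IsProbabilityMeasure (μ i)) →
    ∀ (g : Fin n → ℝ → ℝ) (m : Fin n → ℝ) (W : Fin n → ℝ≥0), (∀ i, Measurable (g i)) →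
    (∀ i, Measure.map (g i) (μ i) = gaussianReal (m i) (W i)) →
    Measure.map (fun x : Fin n → ℝ => ∑ i, g i (x i)) (Measure.pi μ) =
      gaussianReal (∑ i, m i) (∑ i, W i) := by
  intro n
  induction n with
  | zero =>
    intro μ hμ g m W hg h
    have : IsProbabilityMeasure (Measure.pi μ) := inferInstance
    simp only [univ_eq_empty, sum_empty]
    rw [show (fun _ : Fin 0 → ℝ => (0:ℝ)) = fun _ => (0:ℝ) from rfl, Measure.map_const,
      measure_univ, one_smul, gaussianReal_zero_var]
  | succ n ih =>
    intro μ hμ g m W hg h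
    have hsum : (fun x : Fin (n+1) → ℝ => ∑ i, g i (x i)) =
        ((fun p : ℝ × ℝ => p.1 + p.2) ∘ (Prod.map (g 0) (fun y : Fin n → ℝ => ∑ j : Fin n, g j.succ (y j)))) ∘
          (MeasurableEquiv.piFinSuccAbove (fun _ => ℝ) 0) := by
      funext x
      simp only [Function.comp_apply, Prod.map_apply]
      rw [Fin.sum_univ_succ]
      rfl
    have hG : Measurable (fun y : Fin n → ℝ => ∑ j : Fin n, g j.succ (y j)) :=
      Finset.measurable_sum _ fun j _ => (hg j.succ).comp (measurable_pi_apply j)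
    rw [hsum, ← Measure.map_map (measurable_add.comp ((hg 0).prodMap hG))
        (MeasurableEquiv.piFinSuccAbove (fun _ => ℝ) 0).measurable,
      (measurePreserving_piFinSuccAbove μ 0).map_eq,
      ← Measure.map_map measurable_add ((hg 0).prodMap hG),
      ← Measure.map_prod_map _ _ (hg 0) hG, h 0]
    simp only [Fin.succAbove_zero]
    rw [ih (fun j => μ j.succ) (fun j => hμ j.succ) (fun j => g j.succ) (fun j => m j.succ)
        (fun j => W j.succ) (fun j => hg j.succ) (fun j => h j.succ),
      gaussian_conv, ← Fin.sum_univ_succ, ← Fin.sum_univ_succ]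






lemma gauss_ratio (m m' : ℝ) (v : ℝ≥0) (hv : v ≠ 0) :
    gaussianReal m v = (gaussianReal m' v).withDensity
      (fun t => ENNReal.ofReal (Real.exp (((t - m') ^ 2 - (t - m) ^ 2) / (2 * v)))) := by
  rw [gaussianReal_of_var_ne_zero m hv, gaussianReal_of_var_ne_zero m' hv,
    ← withDensity_mul _ (measurable_gaussianPDF _ _)
      (by exact (Measurable.exp (by fun_prop)).ennreal_ofReal)]
  congr 1
  funext t
  simp only [Pi.mul_apply, gaussianPDF]
  rw [← ENNReal.ofReal_mul (gaussianPDFReal_nonneg _ _ _)]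
  congr 1
  simp only [gaussianPDFReal]
  have hvpos : (0:ℝ) < v := lt_of_le_of_ne v.coe_nonneg (by exact_mod_cast (Ne.symm hv))
  conv_rhs => rw [mul_assoc, ← Real.exp_add]
  congr 2
  field_simp
  ring

lemma gauss_symm (u : ℝ) : gaussianReal 0 1 (Set.Ici u) = gaussianReal 0 1 (Set.Iic (-u)) := by
  have h1 : (⟨(-1:ℝ)^2, sq_nonneg _⟩ : ℝ≥0) * 1 = 1 := by ext; norm_num
  have hmap : (gaussianReal 0 1).map ((-1 : ℝ) * ·) = gaussianReal 0 1 := by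
    rw [gaussianReal_map_const_mul, mul_zero]
    exact congrArg _ h1
  conv_lhs => rw [← hmap]
  rw [Measure.map_apply (measurable_const_mul _) measurableSet_Ici]
  congr 1
  ext z
  simp only [Set.mem_preimage, Set.mem_Ici, Set.mem_Iic]
  constructor <;> intro hz <;> linarith

lemma gauss_Ici (m : ℝ) (w : ℝ≥0) (hw : w ≠ 0) (u : ℝ) :
    gaussianReal m w (Set.Ici u) =
      ENNReal.ofReal (cdf (gaussianReal 0 1) ((m - u) / Real.sqrt w)) := by
  have hwpos : (0:ℝ) < w := lt_of_le_of_ne w.coe_nonneg (by exact_mod_cast (Ne.symm hw))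
  have hs : (0:ℝ) < Real.sqrt w := Real.sqrt_pos.2 hwpos
  have hmap : Measure.map (fun t => Real.sqrt w * t + m) (gaussianReal 0 1) = gaussianReal m w := by
    have h := map_affine' (Real.sqrt w) m 0 1
    rwa [mul_zero, zero_add, show ((Real.sqrt w) ^ 2).toNNReal * 1 = w by
      ext; simp [Real.coe_toNNReal _ (sq_nonneg _), Real.sq_sqrt w.coe_nonneg]] at h
  rw [← hmap, Measure.map_apply (by fun_prop) measurableSet_Ici]
  have hpre : (fun t => Real.sqrt w * t + m) ⁻¹' Set.Ici u = Set.Ici ((u - m) / Real.sqrt w) := by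
    ext z
    simp only [Set.mem_preimage, Set.mem_Ici]
    rw [div_le_iff₀ hs]
    constructor <;> intro hz <;> nlinarith
  rw [hpre, gauss_symm, ← ofReal_cdf]
  congr 1
  field_simp
  congr 1
  ring




lemma continuous_pdf : Continuous (gaussianPDFReal 0 1) := by
  unfold gaussianPDFReal
  fun_prop

lemma cdf_eq_integral (x : ℝ) :
    cdf (gaussianReal 0 1) x = ∫ t in Set.Iic x, gaussianPDFReal 0 1 t := by
  rw [cdf_eq_real, measureReal_def, gaussianReal_apply_eq_integral _ (by norm_num),
    ENNReal.toReal_ofReal (integral_nonneg (fun t => gaussianPDFReal_nonneg _ _ _))]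

lemma hasDerivAt_cdf (x : ℝ) :
    HasDerivAt (fun t => cdf (gaussianReal 0 1) t) (gaussianPDFReal 0 1 x) x := by
  have hint : Integrable (gaussianPDFReal 0 1) := integrable_gaussianPDFReal 0 1
  have heq : ∀ t : ℝ, cdf (gaussianReal 0 1) t =
      (∫ s in Set.Iic (0:ℝ), gaussianPDFReal 0 1 s) + ∫ s in (0:ℝ)..t, gaussianPDFReal 0 1 s := by
    intro t
    rw [cdf_eq_integral, ← intervalIntegral.integral_Iic_sub_Iic hint.integrableOn
      hint.integrableOn]
    ring
  rw [funext heq]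
  have h : HasDerivAt (fun t => ∫ s in (0:ℝ)..t, gaussianPDFReal 0 1 s) (gaussianPDFReal 0 1 x) x :=
    intervalIntegral.integral_hasDerivAt_right hint.intervalIntegrable
      continuous_pdf.aestronglyMeasurable.stronglyMeasurableAtFilter
      continuous_pdf.continuousAt
  exact h.const_add _

lemma pdf_shift {ε m : ℝ} (hε : 0 < ε) (hm : m ≠ 0) :
    Real.exp ε * gaussianPDFReal 0 1 (-(ε / m) - m / 2) =
      gaussianPDFReal 0 1 (-(ε / m) + m / 2) := by
  simp only [gaussianPDFReal, NNReal.coe_one]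
  rw [mul_left_comm, ← Real.exp_add]
  congr 2
  field_simp
  ring

lemma g_mono {ε : ℝ} (hε : 0 < ε) {x y : ℝ} (hx : 0 < x) (hxy : x ≤ y) :
    cdf (gaussianReal 0 1) (-(ε / x) + x / 2) -
        Real.exp ε * cdf (gaussianReal 0 1) (-(ε / x) - x / 2) ≤
      cdf (gaussianReal 0 1) (-(ε / y) + y / 2) -
        Real.exp ε * cdf (gaussianReal 0 1) (-(ε / y) - y / 2) := by
  set g : ℝ → ℝ := fun m => cdf (gaussianReal 0 1) (-(ε / m) + m / 2) -
    Real.exp ε * cdf (gaussianReal 0 1) (-(ε / m) - m / 2) with hg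
  have hderiv : ∀ m ∈ Set.Ioi (0:ℝ), HasDerivAt g
      (gaussianPDFReal 0 1 (-(ε / m) + m / 2)) m := by
    intro m hm
    have hm0 : m ≠ 0 := ne_of_gt hm
    have hinv : HasDerivAt (fun m : ℝ => -(ε / m)) (ε / m ^ 2) m := by
      have h : HasDerivAt (fun u : ℝ => -(ε * u⁻¹)) (-(ε * -(m ^ 2)⁻¹)) m :=
        ((hasDerivAt_inv hm0).const_mul ε).neg
      have heqf : (fun u : ℝ => -(ε * u⁻¹)) = fun u : ℝ => -(ε / u) := by
        funext u; rw [div_eq_mul_inv]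
      rw [heqf] at h
      convert h using 1
      field_simp
    have h1 : HasDerivAt (fun m : ℝ => -(ε / m) + m / 2) (ε / m ^ 2 + 1 / 2) m := by
      have := hinv.add ((hasDerivAt_id' m).div_const 2)
      exact this
    have h2 : HasDerivAt (fun m : ℝ => -(ε / m) - m / 2) (ε / m ^ 2 - 1 / 2) m := by
      have := hinv.sub ((hasDerivAt_id' m).div_const 2)
      exact this
    have hc1 := (hasDerivAt_cdf (-(ε / m) + m / 2)).comp m h1
    have hc2 := (hasDerivAt_cdf (-(ε / m) - m / 2)).comp m h2
    have hD := hc1.sub (hc2.const_mul (Real.exp ε))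
    refine hD.congr_deriv ?_
    have hshift := pdf_shift hε hm0
    rw [show Real.exp ε * (gaussianPDFReal 0 1 (-(ε / m) - m / 2) * (ε / m ^ 2 - 1 / 2)) =
      (ε / m ^ 2 - 1 / 2) * (Real.exp ε * gaussianPDFReal 0 1 (-(ε / m) - m / 2)) from by ring,
      hshift]
    ring
  have hsm : StrictMonoOn g (Set.Ioi 0) := by
    apply strictMonoOn_of_deriv_pos (convex_Ioi 0)
      (fun m hm => (hderiv m hm).continuousAt.continuousWithinAt)
    intro m hm
    rw [interior_Ioi] at hm
    rw [(hderiv m hm).deriv]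
    exact gaussianPDFReal_pos _ _ _ one_ne_zero
  exact hsm.monotoneOn hx (lt_of_lt_of_le hx hxy) hxy


end GaussDP

end GaussDPAux

open scoped NNReal ENNReal

/-- **Differential privacy of the Gaussian mechanism (Theorem 1).**  Adding
i.i.d. `N(0, σ²)` noise to each coordinate of a `d`-dimensional query output
with `ℓ₂`-sensitivity `S` yields `(ε, δ)`-differential privacy, where, with
`μ = S/σ` and `Φ` the standard normal CDF,
`δ = Φ(-ε/μ + μ/2) - e^ε Φ(-ε/μ - μ/2)`. -/
theorem gaussian_mechanism_dp
    (d : ℕ) (σ S ε : ℝ) (hσ : 0 < σ) (hS : 0 < S) (hε : 0 < ε)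
    (a a' : Fin d → ℝ)
    (hsens : Real.sqrt (∑ i : Fin d, (a i - a' i) ^ 2) ≤ S)
    (μ δ : ℝ) (hμ : μ = S / σ)
    (hδ : δ = cdf (gaussianReal 0 1) (-(ε / μ) + μ / 2) -
      Real.exp ε * cdf (gaussianReal 0 1) (-(ε / μ) - μ / 2))
    (R : Set (Fin d → ℝ)) (hR : MeasurableSet R) :
    Measure.pi (fun i : Fin d => gaussianReal (a i) (Real.toNNReal (σ ^ 2))) R ≤
      ENNReal.ofReal (Real.exp ε) *
          Measure.pi (fun i : Fin d => gaussianReal (a' i) (Real.toNNReal (σ ^ 2))) R +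
        ENNReal.ofReal δ := by
  classical
  have hσ0 : σ ≠ 0 := ne_of_gt hσ
  set V : ℝ≥0 := Real.toNNReal (σ ^ 2) with hVdef
  have hVr : (V : ℝ) = σ ^ 2 := Real.coe_toNNReal _ (sq_nonneg σ)
  have hV0 : V ≠ 0 := by
    intro h
    rw [h] at hVr
    simp only [NNReal.coe_zero] at hVr
    exact absurd hVr.symm (by positivity)
  set P := Measure.pi (fun i : Fin d => gaussianReal (a i) V) with hP
  set Q := Measure.pi (fun i : Fin d => gaussianReal (a' i) V) with hQ
  set T : ℝ := ∑ i : Fin d, (a i - a' i) ^ 2 with hT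
  have hT0 : 0 ≤ T := Finset.sum_nonneg fun i _ => sq_nonneg _
  by_cases hTz : T = 0
  · -- degenerate case : a = a'
    have haa : a = a' := by
      funext i
      have hz : (a i - a' i) ^ 2 = 0 :=
        (Finset.sum_eq_zero_iff_of_nonneg (fun i _ => sq_nonneg (a i - a' i))).1 hTz i (mem_univ i)
      have := pow_eq_zero_iff (n := 2) (by norm_num) |>.1 hz
      linarith [sub_eq_zero.1 this]
    have hPQ' : P = Q := by rw [hP, hQ, haa]
    rw [hPQ']
    calc Q R = 1 * Q R := (one_mul _).symm
      _ ≤ ENNReal.ofReal (Real.exp ε) * Q R :=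
          mul_le_mul_left (ENNReal.one_le_ofReal.2 (Real.one_le_exp hε.le)) _
      _ ≤ ENNReal.ofReal (Real.exp ε) * Q R + ENNReal.ofReal δ := le_self_add
  · have hTpos : 0 < T := lt_of_le_of_ne hT0 (Ne.symm hTz)
    set k : Fin d → ℝ := fun i => (a i - a' i) / σ ^ 2 with hk
    set b : Fin d → ℝ := fun i => (a' i ^ 2 - a i ^ 2) / (2 * σ ^ 2) with hb
    set L : (Fin d → ℝ) → ℝ := fun x => ∑ i, (k i * x i + b i) with hL
    have hLmeas : Measurable L :=
      Finset.measurable_sum _ fun i _ => by fun_prop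
    -- coordinate likelihood ratios
    have hratio : ∀ i : Fin d, gaussianReal (a i) V =
        (gaussianReal (a' i) V).withDensity
          (fun t => ENNReal.ofReal (Real.exp (k i * t + b i))) := by
      intro i
      have hfun : (fun t : ℝ => ENNReal.ofReal
            (Real.exp (((t - a' i) ^ 2 - (t - a i) ^ 2) / (2 * V)))) =
          fun t => ENNReal.ofReal (Real.exp (k i * t + b i)) := by
        funext t
        rw [hVr]
        have harg : ((t - a' i) ^ 2 - (t - a i) ^ 2) / (2 * σ ^ 2) = k i * t + b i := by
          rw [hk, hb]
          field_simp
          ring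
        rw [harg]
      rw [GaussDP.gauss_ratio (a i) (a' i) V hV0, hfun]
    -- P as density against Q
    have hPQ : P = Q.withDensity (fun x => ENNReal.ofReal (Real.exp (L x))) := by
      rw [hP]
      refine Measure.pi_eq fun s hs => ?_
      rw [withDensity_apply _ (MeasurableSet.univ_pi hs),
        ← lintegral_indicator (MeasurableSet.univ_pi hs)]
      have hindeq : ∀ x : Fin d → ℝ,
          (Set.univ.pi s).indicator (fun x => ENNReal.ofReal (Real.exp (L x))) x =
          ∏ i, (s i).indicator (fun t => ENNReal.ofReal (Real.exp (k i * t + b i))) (x i) := by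
        intro x
        by_cases hx : x ∈ Set.univ.pi s
        · rw [Set.indicator_of_mem hx, hL]
          simp only
          rw [Real.exp_sum, ENNReal.ofReal_prod_of_nonneg (fun i _ => (Real.exp_pos _).le)]
          exact Finset.prod_congr rfl fun i _ =>
            (Set.indicator_of_mem (hx i (Set.mem_univ i))
              (fun t => ENNReal.ofReal (Real.exp (k i * t + b i)))).symm
        · rw [Set.indicator_of_notMem hx]
          rw [Set.mem_univ_pi] at hx
          push_neg at hx
          obtain ⟨i, hi⟩ := hx
          exact (Finset.prod_eq_zero (mem_univ i) (Set.indicator_of_notMem hi _)).symm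
      have hmf : ∀ i : Fin d, Measurable fun t : ℝ =>
          (s i).indicator (fun u => ENNReal.ofReal (Real.exp (k i * u + b i))) t := fun i =>
        ((Real.measurable_exp.comp ((measurable_id.const_mul (k i)).add_const
          (b i))).ennreal_ofReal).indicator (hs i)
      rw [lintegral_congr hindeq, hQ,
        GaussDP.lintegral_pi_prod d (fun i => gaussianReal (a' i) V) (fun i => inferInstance)
          (fun i => (s i).indicator (fun u => ENNReal.ofReal (Real.exp (k i * u + b i)))) hmf]
      refine Finset.prod_congr rfl fun i _ => ?_
      rw [lintegral_indicator (hs i), ← withDensity_apply _ (hs i), ← hratio i]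
    -- distribution of L
    set W : ℝ≥0 := ∑ i : Fin d, ((k i ^ 2).toNNReal * V) with hW
    have hWr : (W : ℝ) = T / σ ^ 2 := by
      rw [hW, NNReal.coe_sum, hT, Finset.sum_div]
      refine Finset.sum_congr rfl fun i _ => ?_
      rw [NNReal.coe_mul, Real.coe_toNNReal _ (sq_nonneg (k i)), hVr, hk]
      field_simp
    have hW0 : W ≠ 0 := by
      intro h
      rw [h] at hWr
      simp only [NNReal.coe_zero] at hWr
      field_simp at hWr
      exact hTz (by linarith)
    have hmapQ : Measure.map L Q = gaussianReal (-(T / (2 * σ ^ 2))) W := by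
      have h := GaussDP.map_sum_pi d (fun i => gaussianReal (a' i) V) (fun i => inferInstance)
        (fun i t => k i * t + b i) (fun i => k i * a' i + b i)
        (fun i => (k i ^ 2).toNNReal * V)
        (fun i => (measurable_id.const_mul (k i)).add_const (b i))
        (fun i => GaussDP.map_affine' (k i) (b i) (a' i) V)
      rw [hL, hQ]
      rw [h]
      congr 1
      rw [show ∑ i, (k i * a' i + b i) = ∑ i, -((a i - a' i) ^ 2 / (2 * σ ^ 2)) from
        Finset.sum_congr rfl fun i _ => by rw [hk, hb]; field_simp; ring]
      rw [Finset.sum_neg_distrib, hT, Finset.sum_div]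
    have hmapP : Measure.map L P = gaussianReal (T / (2 * σ ^ 2)) W := by
      have hratio' : ∀ i : Fin d, Measure.map (fun t => k i * t + b i)
          (gaussianReal (a i) V) = gaussianReal (k i * a i + b i)
            ((k i ^ 2).toNNReal * V) := fun i => GaussDP.map_affine' (k i) (b i) (a i) V
      have h := GaussDP.map_sum_pi d (fun i => gaussianReal (a i) V) (fun i => inferInstance)
        (fun i t => k i * t + b i) (fun i => k i * a i + b i)
        (fun i => (k i ^ 2).toNNReal * V)
        (fun i => (measurable_id.const_mul (k i)).add_const (b i)) hratio'
      rw [hL, hP]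
      rw [h]
      congr 1
      rw [show ∑ i, (k i * a i + b i) = ∑ i, (a i - a' i) ^ 2 / (2 * σ ^ 2) from
        Finset.sum_congr rfl fun i _ => by rw [hk, hb]; field_simp; ring]
      rw [hT, Finset.sum_div]
    -- tail probabilities
    set c : ℝ := Real.sqrt T with hc
    have hcpos : 0 < c := Real.sqrt_pos.2 hTpos
    have hc2 : c ^ 2 = T := Real.sq_sqrt hT0
    have hsqrtW : Real.sqrt (W : ℝ) = c / σ := by
      rw [hWr, Real.sqrt_div hT0, Real.sqrt_sq hσ.le, hc]
    set m₀ : ℝ := c / σ with hm₀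
    have hm₀pos : 0 < m₀ := div_pos hcpos hσ
    set E : Set (Fin d → ℝ) := L ⁻¹' (Set.Ici ε) with hE
    have hEm : MeasurableSet E := hLmeas measurableSet_Ici
    have hPE : P E = ENNReal.ofReal (cdf (gaussianReal 0 1) (-(ε / m₀) + m₀ / 2)) := by
      rw [hE, ← Measure.map_apply hLmeas measurableSet_Ici, hmapP,
        GaussDP.gauss_Ici _ _ hW0]
      congr 2
      rw [hsqrtW, hm₀, show T = c ^ 2 from hc2.symm]
      have h1 : c ≠ 0 := ne_of_gt hcpos
      field_simp
      ring
    have hQE : Q E = ENNReal.ofReal (cdf (gaussianReal 0 1) (-(ε / m₀) - m₀ / 2)) := by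
      rw [hE, ← Measure.map_apply hLmeas measurableSet_Ici, hmapQ,
        GaussDP.gauss_Ici _ _ hW0]
      congr 2
      rw [hsqrtW, hm₀, show T = c ^ 2 from hc2.symm]
      have h1 : c ≠ 0 := ne_of_gt hcpos
      field_simp
      ring
    have hcS : c ≤ S := hsens
    have hm₀le : m₀ ≤ μ := by
      rw [hμ, hm₀]
      gcongr
    have hreal : cdf (gaussianReal 0 1) (-(ε / m₀) + m₀ / 2) ≤
        Real.exp ε * cdf (gaussianReal 0 1) (-(ε / m₀) - m₀ / 2) + δ := by
      have h := GaussDP.g_mono hε hm₀pos hm₀le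
      rw [← hδ] at h
      linarith
    have hkey : P E ≤ ENNReal.ofReal (Real.exp ε) * Q E + ENNReal.ofReal δ := by
      rw [hPE, hQE, ← ENNReal.ofReal_mul (Real.exp_nonneg ε)]
      calc ENNReal.ofReal (cdf (gaussianReal 0 1) (-(ε / m₀) + m₀ / 2))
          ≤ ENNReal.ofReal (Real.exp ε * cdf (gaussianReal 0 1) (-(ε / m₀) - m₀ / 2) + δ) :=
            ENNReal.ofReal_le_ofReal hreal
        _ ≤ _ + _ := ENNReal.ofReal_add_le
    have h₁ : P (R \ E) ≤ ENNReal.ofReal (Real.exp ε) * Q (R \ E) := by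
      rw [hPQ, withDensity_apply _ (hR.diff hEm)]
      calc ∫⁻ x in R \ E, ENNReal.ofReal (Real.exp (L x)) ∂Q
          ≤ ∫⁻ _ in R \ E, ENNReal.ofReal (Real.exp ε) ∂Q := by
            refine setLIntegral_mono measurable_const fun x hx => ?_
            refine ENNReal.ofReal_le_ofReal (Real.exp_le_exp.2 ?_)
            have hx2 : x ∉ E := hx.2
            rw [hE, Set.mem_preimage, Set.mem_Ici, not_le] at hx2
            exact hx2.le
        _ = ENNReal.ofReal (Real.exp ε) * Q (R \ E) := setLIntegral_const _ _
    have h₂ : ENNReal.ofReal (Real.exp ε) * Q (E \ R) ≤ P (E \ R) := by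
      rw [hPQ, withDensity_apply _ (hEm.diff hR)]
      calc ENNReal.ofReal (Real.exp ε) * Q (E \ R)
          = ∫⁻ _ in E \ R, ENNReal.ofReal (Real.exp ε) ∂Q := (setLIntegral_const _ _).symm
        _ ≤ ∫⁻ x in E \ R, ENNReal.ofReal (Real.exp (L x)) ∂Q := by
            refine setLIntegral_mono
              ((Real.measurable_exp.comp hLmeas).ennreal_ofReal) fun x hx => ?_
            refine ENNReal.ofReal_le_ofReal (Real.exp_le_exp.2 ?_)
            have hx1 : x ∈ E := hx.1
            rw [hE, Set.mem_preimage, Set.mem_Ici] at hx1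
            exact hx1
    have hPsplitE : P (E ∩ R) + P (E \ R) = P E := measure_inter_add_diff E hR
    have hQsplitE : Q (E ∩ R) + Q (E \ R) = Q E := measure_inter_add_diff E hR
    have hfin : ENNReal.ofReal (Real.exp ε) * Q (E \ R) ≠ ⊤ :=
      ENNReal.mul_ne_top ENNReal.ofReal_ne_top (measure_ne_top Q _)
    have hRE : P (R ∩ E) ≤ ENNReal.ofReal (Real.exp ε) * Q (R ∩ E) + ENNReal.ofReal δ := by
      rw [Set.inter_comm]
      rw [← ENNReal.add_le_add_iff_right hfin]
      calc P (E ∩ R) + ENNReal.ofReal (Real.exp ε) * Q (E \ R)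
          ≤ P (E ∩ R) + P (E \ R) := add_le_add_right h₂ _
        _ = P E := hPsplitE
        _ ≤ ENNReal.ofReal (Real.exp ε) * Q E + ENNReal.ofReal δ := hkey
        _ = ENNReal.ofReal (Real.exp ε) * (Q (E ∩ R) + Q (E \ R)) + ENNReal.ofReal δ := by
            rw [hQsplitE]
        _ = ENNReal.ofReal (Real.exp ε) * Q (E ∩ R) + ENNReal.ofReal δ +
              ENNReal.ofReal (Real.exp ε) * Q (E \ R) := by ring
    have hPsplitR : P (R ∩ E) + P (R \ E) = P R := measure_inter_add_diff R hEm
    have hQsplitR : Q (R ∩ E) + Q (R \ E) = Q R := measure_inter_add_diff R hEm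
    calc P R = P (R ∩ E) + P (R \ E) := hPsplitR.symm
      _ ≤ (ENNReal.ofReal (Real.exp ε) * Q (R ∩ E) + ENNReal.ofReal δ) +
            ENNReal.ofReal (Real.exp ε) * Q (R \ E) := add_le_add hRE h₁
      _ = ENNReal.ofReal (Real.exp ε) * (Q (R ∩ E) + Q (R \ E)) + ENNReal.ofReal δ := by ring
      _ = ENNReal.ofReal (Real.exp ε) * Q R + ENNReal.ofReal δ := by rw [hQsplitR]
end

section
/- One-dimensional Gaussian shift inequality (core of Theorem 1). Let σ > 0, S > 0, ε > 0, and let a, a' ∈ ℝ with |a − a'| ≤ S. Set μ = S/σ and δ = Φ(−ε/μ + μ/2) − e^ε·Φ(−ε/μ − μ/2). Then for every measurable set R ⊆ ℝ, gaussianReal a σ² (R) ≤ e^ε · gaussianReal a' σ² (R) + δ. -/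
open MeasureTheory ProbabilityTheory

open Real Set
open scoped NNReal

lemma stdPhi_eq_integral (x : ℝ) :
    cdf (gaussianReal 0 1) x = ∫ u in Iic x, gaussianPDFReal 0 1 u := by
  rw [cdf_eq_real, measureReal_def, gaussianReal_apply_eq_integral 0 one_ne_zero,
    ENNReal.toReal_ofReal]
  exact setIntegral_nonneg measurableSet_Iic fun u _ => gaussianPDFReal_nonneg _ _ _

lemma pdf_shift (b : ℝ) : gaussianPDFReal b 1 = fun u => gaussianPDFReal 0 1 (u - b) := by
  funext u
  rw [gaussianPDFReal_sub, zero_add]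

lemma integral_Iic_shift (b m : ℝ) :
    ∫ u in Iic b, gaussianPDFReal 0 1 (u - m) = cdf (gaussianReal 0 1) (b - m) := by
  rw [stdPhi_eq_integral]
  have h := (measurePreserving_add_right (volume : Measure ℝ) (-m)).setIntegral_preimage_emb
    (measurableEmbedding_addRight (-m)) (gaussianPDFReal 0 1) (Iic (b - m))
  have hpre : (fun x : ℝ => x + -m) ⁻¹' Iic (b - m) = Iic b := by
    ext x
    simp [sub_eq_add_neg]
  rw [hpre] at h
  rw [← h]
  simp [sub_eq_add_neg]


lemma pdf_pt_le {ε m u : ℝ} (hε : 0 < ε) (hm : 0 < m) (hu : u ≤ m / 2 - ε / m) :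
    Real.exp ε * gaussianPDFReal 0 1 (u - m) ≤ gaussianPDFReal 0 1 u := by
  have h2 : u * m ≤ m ^ 2 / 2 - ε := by
    have h := mul_le_mul_of_nonneg_right hu hm.le
    rw [sub_mul, div_mul_eq_mul_div, div_mul_cancel₀ _ hm.ne'] at h
    nlinarith
  unfold gaussianPDFReal
  rw [mul_comm (Real.exp ε), mul_assoc, ← Real.exp_add]
  refine mul_le_mul_of_nonneg_left ?_ (inv_nonneg.2 (Real.sqrt_nonneg _))
  refine Real.exp_le_exp.2 ?_
  push_cast
  nlinarith

lemma pdf_pt_ge {ε m u : ℝ} (hε : 0 < ε) (hm : 0 < m) (hu : m / 2 - ε / m ≤ u) :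
    gaussianPDFReal 0 1 u ≤ Real.exp ε * gaussianPDFReal 0 1 (u - m) := by
  have h2 : m ^ 2 / 2 - ε ≤ u * m := by
    have h := mul_le_mul_of_nonneg_right hu hm.le
    rw [sub_mul, div_mul_eq_mul_div, div_mul_cancel₀ _ hm.ne'] at h
    nlinarith
  unfold gaussianPDFReal
  rw [mul_left_comm (Real.exp ε), ← Real.exp_add]
  refine mul_le_mul_of_nonneg_left ?_ (inv_nonneg.2 (Real.sqrt_nonneg _))
  refine Real.exp_le_exp.2 ?_
  push_cast
  nlinarith

lemma pdf_mono_neg {x y : ℝ} (hxy : x ≤ y) (hy : y ≤ 0) :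
    gaussianPDFReal 0 1 x ≤ gaussianPDFReal 0 1 y := by
  unfold gaussianPDFReal
  refine mul_le_mul_of_nonneg_left ?_ (inv_nonneg.2 (Real.sqrt_nonneg _))
  refine Real.exp_le_exp.2 ?_
  push_cast
  nlinarith

lemma f_mono {ε m M : ℝ} (hε : 0 < ε) (hm : 0 < m) (hmM : m ≤ M) :
    cdf (gaussianReal 0 1) (m/2 - ε/m) - Real.exp ε * cdf (gaussianReal 0 1) (m/2 - ε/m - m)
      ≤ cdf (gaussianReal 0 1) (M/2 - ε/M) - Real.exp ε * cdf (gaussianReal 0 1) (M/2 - ε/M - M) := by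
  have hM : 0 < M := hm.trans_le hmM
  set A := m/2 - ε/m with hA
  set B := M/2 - ε/M with hB
  have hAB : A ≤ B := by
    have h1 : ε / M ≤ ε / m := by gcongr
    simp only [hA, hB]; linarith
  have hint : ∀ (c : ℝ) (s : Set ℝ), IntegrableOn (fun u => gaussianPDFReal 0 1 (u - c)) s volume := by
    intro c s
    have := (integrable_gaussianPDFReal c 1).integrableOn (s := s)
    rwa [pdf_shift] at this
  have hint0 : ∀ s : Set ℝ, IntegrableOn (gaussianPDFReal 0 1) s volume :=
    fun s => (integrable_gaussianPDFReal 0 1).integrableOn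
  have hgm : ∀ (c : ℝ) (s : Set ℝ), IntegrableOn
      (fun u => gaussianPDFReal 0 1 u - Real.exp ε * gaussianPDFReal 0 1 (u - c)) s volume :=
    fun c s => (hint0 s).sub ((hint c s).const_mul _)
  rw [stdPhi_eq_integral A, stdPhi_eq_integral B, ← integral_Iic_shift A m,
    ← integral_Iic_shift B M, ← integral_const_mul, ← integral_const_mul,
    ← integral_sub (hint0 _) ((hint m _).const_mul _),
    ← integral_sub (hint0 _) ((hint M _).const_mul _)]
  have hsplit : (∫ u in Iic B, (gaussianPDFReal 0 1 u - Real.exp ε * gaussianPDFReal 0 1 (u - M)))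
      = (∫ u in Iic A, (gaussianPDFReal 0 1 u - Real.exp ε * gaussianPDFReal 0 1 (u - M)))
        + ∫ u in Ioc A B, (gaussianPDFReal 0 1 u - Real.exp ε * gaussianPDFReal 0 1 (u - M)) := by
    rw [← setIntegral_union (Iic_disjoint_Ioc le_rfl) measurableSet_Ioc (hgm M _) (hgm M _),
      Iic_union_Ioc_eq_Iic hAB]
  have h1 : (∫ u in Iic A, (gaussianPDFReal 0 1 u - Real.exp ε * gaussianPDFReal 0 1 (u - m)))
      ≤ ∫ u in Iic A, (gaussianPDFReal 0 1 u - Real.exp ε * gaussianPDFReal 0 1 (u - M)) := by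
    refine setIntegral_mono_on (hgm m _) (hgm M _) measurableSet_Iic ?_
    intro u hu
    have h3 : u - M ≤ u - m := by linarith
    have h4 : u - m ≤ 0 := by
      have h5 : 0 < ε / m := div_pos hε hm
      simp only [mem_Iic, hA] at hu
      linarith
    have h6 := pdf_mono_neg h3 h4
    have h7 := mul_le_mul_of_nonneg_left h6 (Real.exp_nonneg ε)
    linarith
  have h2 : 0 ≤ ∫ u in Ioc A B, (gaussianPDFReal 0 1 u - Real.exp ε * gaussianPDFReal 0 1 (u - M)) := by
    refine setIntegral_nonneg measurableSet_Ioc ?_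
    intro u hu
    have h8 := pdf_pt_le hε hM (u := u) hu.2
    linarith
  linarith [hsplit, h1, h2]

lemma gauss_core (ε M : ℝ) (hε : 0 < ε) (hM : 0 < M) (b b' : ℝ) (hbb : b ≤ b') (hd : b' - b ≤ M)
    (R : Set ℝ) (hR : MeasurableSet R) :
    gaussianReal b 1 R ≤ ENNReal.ofReal (Real.exp ε) * gaussianReal b' 1 R +
      ENNReal.ofReal (cdf (gaussianReal 0 1) (M/2 - ε/M)
        - Real.exp ε * cdf (gaussianReal 0 1) (M/2 - ε/M - M)) := by
  rcases eq_or_lt_of_le hbb with h0 | h0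
  · refine le_trans ?_ le_self_add
    rw [← h0]
    conv_lhs => rw [← one_mul (gaussianReal b 1 R)]
    refine mul_le_mul_left ?_ _
    rw [← ENNReal.ofReal_one]
    exact ENNReal.ofReal_le_ofReal (Real.one_le_exp hε.le)
  · set m := b' - b with hmdef
    have hm : 0 < m := sub_pos.2 h0
    set c := (b + b')/2 - ε/m with hc
    have hcb : c - b = m/2 - ε/m := by rw [hc, hmdef]; ring
    have hxb' : ∀ x : ℝ, x - b' = (x - b) - m := fun x => by rw [hmdef]; ring
    have hint : ∀ (t : ℝ) (s : Set ℝ),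
        IntegrableOn (fun u => gaussianPDFReal 0 1 (u - t)) s volume := by
      intro t s
      have := (integrable_gaussianPDFReal t 1).integrableOn (s := s)
      rwa [pdf_shift] at this
    have hgm : ∀ s : Set ℝ, IntegrableOn
        (fun x => gaussianPDFReal 0 1 (x - b) - Real.exp ε * gaussianPDFReal 0 1 (x - b')) s
          volume := fun s => (hint b s).sub ((hint b' s).const_mul _)
    -- pointwise facts
    have hpt1 : ∀ x ∈ Iic c,
        Real.exp ε * gaussianPDFReal 0 1 (x - b') ≤ gaussianPDFReal 0 1 (x - b) := by
      intro x hx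
      rw [hxb' x]
      exact pdf_pt_le hε hm (by rw [← hcb]; exact sub_le_sub_right hx b)
    have hpt2 : ∀ x ∈ Ioi c,
        gaussianPDFReal 0 1 (x - b) ≤ Real.exp ε * gaussianPDFReal 0 1 (x - b') := by
      intro x hx
      rw [hxb' x]
      exact pdf_pt_ge hε hm (by rw [← hcb]; exact sub_le_sub_right (le_of_lt hx) b)
    -- splitting of R
    have hsplit : ∀ f : ℝ → ℝ, IntegrableOn f (R ∩ Iic c) volume →
        IntegrableOn f (R ∩ Ioi c) volume →
        (∫ x in R, f x) = (∫ x in R ∩ Iic c, f x) + ∫ x in R ∩ Ioi c, f x := by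
      intro f h1 h2
      rw [← setIntegral_union ((Iic_disjoint_Ioi le_rfl).mono inter_subset_right
        inter_subset_right) (hR.inter measurableSet_Ioi) h1 h2,
        ← inter_union_distrib_left, Iic_union_Ioi, inter_univ]
    -- part on Iic c
    have e1a : (∫ x in R ∩ Iic c,
          (gaussianPDFReal 0 1 (x - b) - Real.exp ε * gaussianPDFReal 0 1 (x - b')))
        ≤ ∫ x in Iic c,
          (gaussianPDFReal 0 1 (x - b) - Real.exp ε * gaussianPDFReal 0 1 (x - b')) := by
      refine setIntegral_mono_set (hgm _) ?_ (HasSubset.Subset.eventuallyLE inter_subset_right)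
      refine (ae_restrict_iff' measurableSet_Iic).2 (ae_of_all _ fun x hx => ?_)
      exact sub_nonneg.2 (hpt1 x hx)
    have e1b : (∫ x in Iic c,
          (gaussianPDFReal 0 1 (x - b) - Real.exp ε * gaussianPDFReal 0 1 (x - b')))
        = cdf (gaussianReal 0 1) (m/2 - ε/m) -
            Real.exp ε * cdf (gaussianReal 0 1) (m/2 - ε/m - m) := by
      rw [integral_sub (hint b _) ((hint b' _).const_mul _), integral_const_mul,
        integral_Iic_shift c b, integral_Iic_shift c b', hcb]
      congr 2
      rw [hc, hmdef]; ring
    -- part on Ioi c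
    have e2 : (∫ x in R ∩ Ioi c, gaussianPDFReal 0 1 (x - b))
        ≤ Real.exp ε * ∫ x in R ∩ Ioi c, gaussianPDFReal 0 1 (x - b') := by
      rw [← integral_const_mul]
      refine setIntegral_mono_on (hint b _) ((hint b' _).const_mul _)
        (hR.inter measurableSet_Ioi) fun x hx => hpt2 x hx.2
    -- combine into the real inequality
    have hsb := hsplit _ ((hint b _).mono_set inter_subset_left)
      ((hint b _).mono_set inter_subset_left)
    have hsb' := hsplit _ ((hint b' _).mono_set inter_subset_left)
      ((hint b' _).mono_set inter_subset_left)
    have e1c : (∫ x in R ∩ Iic c, gaussianPDFReal 0 1 (x - b))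
        ≤ Real.exp ε * (∫ x in R ∩ Iic c, gaussianPDFReal 0 1 (x - b'))
          + (cdf (gaussianReal 0 1) (m/2 - ε/m) -
              Real.exp ε * cdf (gaussianReal 0 1) (m/2 - ε/m - m)) := by
      have := e1a.trans_eq e1b
      rw [integral_sub ((hint b _).mono_set inter_subset_left)
        (((hint b' _).mono_set inter_subset_left).const_mul _), integral_const_mul] at this
      linarith
    have hfle := f_mono hε hm hd
    have key : (∫ x in R, gaussianPDFReal 0 1 (x - b))
        ≤ Real.exp ε * (∫ x in R, gaussianPDFReal 0 1 (x - b'))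
          + (cdf (gaussianReal 0 1) (M/2 - ε/M) -
              Real.exp ε * cdf (gaussianReal 0 1) (M/2 - ε/M - M)) := by
      rw [hsb, hsb', mul_add]
      linarith
    -- conclude in ℝ≥0∞
    rw [gaussianReal_apply_eq_integral b one_ne_zero R,
      gaussianReal_apply_eq_integral b' one_ne_zero R, pdf_shift b, pdf_shift b']
    calc ENNReal.ofReal (∫ x in R, gaussianPDFReal 0 1 (x - b))
        ≤ ENNReal.ofReal (Real.exp ε * (∫ x in R, gaussianPDFReal 0 1 (x - b'))
            + (cdf (gaussianReal 0 1) (M/2 - ε/M) -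
              Real.exp ε * cdf (gaussianReal 0 1) (M/2 - ε/M - M))) :=
          ENNReal.ofReal_le_ofReal key
      _ ≤ ENNReal.ofReal (Real.exp ε * (∫ x in R, gaussianPDFReal 0 1 (x - b')))
            + ENNReal.ofReal (cdf (gaussianReal 0 1) (M/2 - ε/M) -
              Real.exp ε * cdf (gaussianReal 0 1) (M/2 - ε/M - M)) := ENNReal.ofReal_add_le
      _ = ENNReal.ofReal (Real.exp ε) * ENNReal.ofReal (∫ x in R, gaussianPDFReal 0 1 (x - b'))
            + ENNReal.ofReal (cdf (gaussianReal 0 1) (M/2 - ε/M) -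
              Real.exp ε * cdf (gaussianReal 0 1) (M/2 - ε/M - M)) := by
          rw [ENNReal.ofReal_mul (Real.exp_nonneg ε)]

lemma gauss_neg_apply (b : ℝ) (s : Set ℝ) (hs : MeasurableSet s) :
    gaussianReal b 1 s = gaussianReal (-b) 1 ((fun x : ℝ => -x) ⁻¹' s) := by
  have hvar : (⟨(-1 : ℝ) ^ 2, sq_nonneg _⟩ : ℝ≥0) * 1 = 1 := by
    refine NNReal.coe_injective ?_
    norm_num
    rfl
  have h := gaussianReal_map_const_mul (μ := -b) (v := 1) (-1)
  norm_num at h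
  rw [← h, Measure.map_apply measurable_neg hs]

lemma gauss_core' (ε M : ℝ) (hε : 0 < ε) (hM : 0 < M) (b b' : ℝ) (hd : |b - b'| ≤ M)
    (R : Set ℝ) (hR : MeasurableSet R) :
    gaussianReal b 1 R ≤ ENNReal.ofReal (Real.exp ε) * gaussianReal b' 1 R +
      ENNReal.ofReal (cdf (gaussianReal 0 1) (M/2 - ε/M)
        - Real.exp ε * cdf (gaussianReal 0 1) (M/2 - ε/M - M)) := by
  obtain ⟨hd1, hd2⟩ := abs_le.1 hd
  rcases le_total b b' with hbb | hbb
  · exact gauss_core ε M hε hM b b' hbb (by linarith) R hR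
  · rw [gauss_neg_apply b R hR, gauss_neg_apply b' R hR]
    exact gauss_core ε M hε hM (-b) (-b') (by linarith) (by linarith) _
      (measurable_neg hR)

/-- **One-dimensional Gaussian shift inequality** (core of Theorem 1).  Two
real Gaussian measures with common variance `σ²` and means at distance at most
`S` are `(ε, δ)`-indistinguishable, where, with `μ = S/σ` and `Φ` the standard
normal CDF, `δ = Φ(-ε/μ + μ/2) - e^ε Φ(-ε/μ - μ/2)`. -/
theorem gaussian_shift_indistinguishable
    (σ S ε : ℝ) (hσ : 0 < σ) (hS : 0 < S) (hε : 0 < ε)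
    (a a' : ℝ) (hshift : |a - a'| ≤ S)
    (μ δ : ℝ) (hμ : μ = S / σ)
    (hδ : δ = cdf (gaussianReal 0 1) (-(ε / μ) + μ / 2) -
      Real.exp ε * cdf (gaussianReal 0 1) (-(ε / μ) - μ / 2))
    (R : Set ℝ) (hR : MeasurableSet R) :
    gaussianReal a (Real.toNNReal (σ ^ 2)) R ≤
      ENNReal.ofReal (Real.exp ε) * gaussianReal a' (Real.toNNReal (σ ^ 2)) R +
        ENNReal.ofReal δ := by
  have hμpos : 0 < μ := hμ ▸ div_pos hS hσ
  have hmap : ∀ t : ℝ, gaussianReal t (Real.toNNReal (σ ^ 2))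
      = (gaussianReal (t / σ) 1).map (fun x : ℝ => σ * x) := by
    intro t
    rw [gaussianReal_map_const_mul]
    congr 1
    · field_simp
    · rw [mul_one]
      refine NNReal.coe_injective ?_
      simp [Real.coe_toNNReal _ (sq_nonneg σ)]
  have happ : ∀ t : ℝ, gaussianReal t (Real.toNNReal (σ ^ 2)) R
      = gaussianReal (t / σ) 1 ((fun x : ℝ => σ * x) ⁻¹' R) := by
    intro t
    rw [hmap t, Measure.map_apply (measurable_const_mul _) hR]
  rw [happ a, happ a']
  have hdist : |a / σ - a' / σ| ≤ μ := by
    rw [div_sub_div_same, abs_div, abs_of_pos hσ, hμ]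
    gcongr
  have h := gauss_core' ε μ hε hμpos (a / σ) (a' / σ) hdist _ ((measurable_const_mul σ) hR)
  have e1 : -(ε / μ) + μ / 2 = μ / 2 - ε / μ := by ring
  have e2 : -(ε / μ) - μ / 2 = μ / 2 - ε / μ - μ := by ring
  rw [hδ, e1, e2]
  exact h
end
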